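/- arXiv:1501.03170 — 8 statements merged into one kernel-verified Lean document; each statement's English description precedes it below -/
import Mathlib

section
/- A positive integer n is a cyclic number (i.e., every group of order n is cyclic) if and only if gcd(n, φ(n)) = 1, where φ is Euler's totient function. -/
/-!
If `gcd(n, φ n) = 1` then `n` is squarefree, so a group `G` of order `n` has cyclic Sylow
subgroups and hence a cyclic commutator subgroup `G'`. Since `|Aut G'| = φ |G'|` divides `φ n`,
which is coprime to `n`, conjugation on `G'` is trivial: `G'` is central, `G` is nilpotent, and a
nilpotent group with cyclic Sylow subgroups is cyclic.

Conversely, a prime `p` dividing `n` and `φ n` either satisfies `p² ∣ n`, and `C_p × C_p` is not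
cyclic, or divides `q - 1` for a prime `q ∣ n`, and then `C_q ⋊ C_p` is not abelian. Either group
has order dividing `n`, and its product with a cyclic group of the complementary order is a
noncyclic group of order `n`.
-/

open Subgroup

theorem Nat.squarefree_of_coprime_totient {n : ℕ} (h : n.Coprime n.totient) : Squarefree n := by
  refine Nat.squarefree_iff_prime_squarefree.mpr fun p hp hpp => hp.one_lt.ne' ?_
  have hp_dvd_totient : p ∣ n.totient := by
    have := Nat.totient_dvd_of_dvd hpp
    rw [← sq, Nat.totient_prime_pow_succ hp, pow_one] at this
    exact (dvd_mul_right p _).trans this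
  exact Nat.eq_one_of_dvd_coprimes h ((dvd_mul_right p p).trans hpp) hp_dvd_totient

theorem Nat.mul_self_dvd_or_exists_dvd_sub_one_of_dvd_totient {n p : ℕ} (hp : p.Prime)
    (h : p ∣ n.totient) : p * p ∣ n ∨ ∃ q, q.Prime ∧ q ∣ n ∧ p ∣ q - 1 := by
  rcases eq_or_ne n 0 with rfl | hn
  · simp
  rw [Nat.totient_eq_prod_factorization hn, Finsupp.prod,
    hp.prime.dvd_finsetProd_iff] at h
  obtain ⟨q, hq, hpq⟩ := h
  rw [Nat.support_factorization] at hq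
  have hq_prime := Nat.prime_of_mem_primeFactors hq
  rcases hp.prime.dvd_mul.mp hpq with hpow | hsub
  · left
    have hk : 2 ≤ n.factorization q := by
      by_contra! hk
      interval_cases hfq : n.factorization q <;> simp_all [Nat.Prime.ne_one]
    rw [(Nat.prime_dvd_prime_iff_eq hp hq_prime).mp (hp.dvd_of_dvd_pow hpow), ← sq]
    exact (pow_dvd_pow q hk).trans (Nat.ordProj_dvd n q)
  · exact Or.inr ⟨q, hq_prime, Nat.dvd_of_mem_primeFactors hq, hsub⟩

theorem MonoidHom.eq_one_of_coprime_card {G H : Type*} [Group G] [Group H] [Finite G] [Finite H]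
    (f : G →* H) (h : (Nat.card G).Coprime (Nat.card H)) (g : G) : f g = 1 :=
  orderOf_eq_one_iff.mp <| Nat.eq_one_of_dvd_coprimes h
    ((orderOf_map_dvd f g).trans (orderOf_dvd_natCard g)) (orderOf_dvd_natCard (f g))

theorem Subgroup.le_center_of_coprime_card_mulAut {G : Type*} [Group G] [Finite G]
    {H : Subgroup G} [H.Normal] (h : (Nat.card G).Coprime (Nat.card (MulAut H))) :
    H ≤ center G := by
  intro k hk
  rw [mem_center_iff]
  intro g
  have hconj := congrArg Subtype.val
    (DFunLike.congr_fun (MulAut.conjNormal.eq_one_of_coprime_card h g) ⟨k, hk⟩)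
  rw [MulAut.conjNormal_apply] at hconj
  exact mul_inv_eq_iff_eq_mul.mp hconj

theorem isCyclic_of_coprime_card_totient {G : Type*} [Group G] [Finite G]
    (h : (Nat.card G).Coprime (Nat.card G).totient) : IsCyclic G := by
  have : IsZGroup G := IsZGroup.of_squarefree (Nat.squarefree_of_coprime_totient h)
  have := IsZGroup.isCyclic_commutator G
  have hcentral : commutator G ≤ center G := by
    apply le_center_of_coprime_card_mulAut
    rw [IsCyclic.card_mulAut]
    exact h.coprime_dvd_right (Nat.totient_dvd_of_dvd (card_subgroup_dvd_card _))
  have : Group.IsNilpotent G :=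
    Subgroup.isNilpotent_of_ker_le_center Abelianization.of (Abelianization.ker_of G ▸ hcentral)
  infer_instance

theorem SemidirectProduct.not_isMulCommutative {N G : Type*} [Group N] [Group G]
    {φ : G →* MulAut N} (hφ : φ ≠ 1) : ¬ IsMulCommutative (N ⋊[φ] G) := by
  intro hcomm
  obtain ⟨g, hg⟩ := DFunLike.ne_iff.mp hφ
  obtain ⟨x, hx⟩ := DFunLike.ne_iff.mp hg
  apply hx
  rw [MonoidHom.one_apply, MulAut.one_apply, ← inl_inj (φ := φ), inl_aut,
    hcomm.is_comm.comm (inr g), mul_assoc, ← map_mul, mul_inv_cancel, map_one, mul_one]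

def IsCyclicNumber (n : ℕ) : Prop :=
  ∀ (G : Type) [Group G] [Fintype G], Fintype.card G = n → IsCyclic G

namespace IsCyclicNumber

variable {n : ℕ}

theorem isCyclic_of_card_dvd (h : IsCyclicNumber n) (hn : 0 < n) (H : Type) [Group H]
    (hH : Nat.card H ∣ n) : IsCyclic H := by
  have : Finite H := Nat.finite_of_card_ne_zero (ne_zero_of_dvd_ne_zero hn.ne' hH)
  have : NeZero (n / Nat.card H) := ⟨(Nat.div_pos (Nat.le_of_dvd hn hH) Nat.card_pos).ne'⟩
  have : Fintype H := Fintype.ofFinite H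
  have := h (H × Multiplicative (ZMod (n / Nat.card H))) <| by
    rw [Fintype.card_prod, ← Nat.card_eq_fintype_card, Fintype.card_multiplicative, ZMod.card,
      Nat.mul_div_cancel' hH]
  exact isCyclic_left_of_prod H (Multiplicative (ZMod (n / Nat.card H)))

theorem squarefree (h : IsCyclicNumber n) (hn : 0 < n) : Squarefree n := by
  refine Nat.squarefree_iff_prime_squarefree.mpr fun p hp hpp => hp.one_lt.ne' ?_
  have : Fact p.Prime := ⟨hp⟩
  have hcard : Nat.card (Multiplicative (ZMod p)) = p := by
    rw [Nat.card_eq_fintype_card, Fintype.card_multiplicative, ZMod.card]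
  have := h.isCyclic_of_card_dvd hn (Multiplicative (ZMod p) × Multiplicative (ZMod p))
    (by rwa [Nat.card_prod, hcard])
  rw [Group.isCyclic_prod_iff, hcard, Nat.coprime_self] at this
  exact this.2.2

theorem not_dvd_sub_one (h : IsCyclicNumber n) (hn : 0 < n) {p q : ℕ} (hp : p.Prime)
    (hq : q.Prime) (hpn : p ∣ n) (hqn : q ∣ n) : ¬ p ∣ q - 1 := by
  intro hpq
  have : Fact p.Prime := ⟨hp⟩
  have : Fact q.Prime := ⟨hq⟩
  let N := Multiplicative (ZMod q)
  have hcard_aut : Nat.card (MulAut N) = q - 1 := by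
    rw [IsCyclic.card_mulAut, Nat.card_eq_fintype_card, Fintype.card_multiplicative, ZMod.card,
      Nat.totient_prime hq]
  obtain ⟨σ, hσ⟩ := exists_prime_orderOf_dvd_card' p (hcard_aut ▸ hpq)
  have hne : p ≠ q := by
    have := Nat.le_of_dvd (Nat.sub_pos_of_lt hq.one_lt) hpq
    have := hq.one_lt
    omega
  have hcard : Nat.card (N ⋊[(zpowers σ).subtype] zpowers σ) ∣ n := by
    rw [SemidirectProduct.card, Nat.card_zpowers, hσ, Nat.card_eq_fintype_card,
      Fintype.card_multiplicative, ZMod.card, mul_comm]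
    exact ((Nat.coprime_primes hp hq).mpr hne).mul_dvd_of_dvd_of_dvd hpn hqn
  refine SemidirectProduct.not_isMulCommutative ?_ (h.isCyclic_of_card_dvd hn _ hcard).isMulCommutative
  intro hσ1
  have := DFunLike.congr_fun hσ1 ⟨σ, mem_zpowers σ⟩
  rw [Subgroup.subtype_apply, MonoidHom.one_apply, ← orderOf_eq_one_iff, hσ] at this
  exact hp.one_lt.ne' this

theorem coprime_totient (h : IsCyclicNumber n) (hn : 0 < n) : n.Coprime n.totient := by
  refine Nat.coprime_of_dvd fun p hp hpn hpφ => ?_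
  rcases Nat.mul_self_dvd_or_exists_dvd_sub_one_of_dvd_totient hp hpφ with hpp | ⟨q, hq, hqn, hpq⟩
  · exact Nat.squarefree_iff_prime_squarefree.mp (h.squarefree hn) p hp hpp
  · exact h.not_dvd_sub_one hn hp hq hpn hqn hpq

end IsCyclicNumber

/-- A positive integer `n` is a cyclic number (every group of order `n` is cyclic)
iff `gcd(n, φ(n)) = 1`. -/
theorem cyclic_number_iff_coprime_totient (n : ℕ) (hn : 0 < n) :
    (∀ (G : Type) [Group G] [Fintype G], Fintype.card G = n → IsCyclic G) ↔
      Nat.gcd n (Nat.totient n) = 1 :=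
  ⟨fun h => IsCyclicNumber.coprime_totient h hn, fun h G _ _ hG =>
    isCyclic_of_coprime_card_totient (by rwa [Nat.card_eq_fintype_card, hG])⟩
end

section
/- A positive integer n is an abelian number (i.e., every group of order n is abelian) if and only if n is cube-free and has nilpotent factorization. -/
/-- A positive integer `n` with prime factorization `p₁^a₁ ⋯ p_r^a_r` has *nilpotent
factorization* if `pᵢ ∤ p_j^k - 1` for all `i ≠ j` and all `1 ≤ k ≤ a_j`. -/
def HasNilpotentFactorization (n : ℕ) : Prop :=
  ∀ p ∈ n.primeFactors, ∀ q ∈ n.primeFactors, p ≠ q →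
    ∀ k : ℕ, 1 ≤ k → k ≤ n.factorization q → ¬ (p ∣ q ^ k - 1)

/-!
A Sylow `p`-subgroup `P` of a group `G` of cube-free order `n` is abelian, as `|P| ∣ p²`. An
`r`-group acting on `P` fixes a subgroup of order `p^j` with `p^a ≡ p^j (mod r)`, so it acts
trivially unless `r ∣ p^(a-j) - 1`; with nilpotent factorization this gives `N(P) = C(P)`, and
Burnside's transfer `G → P` has a kernel of order prime to `p` that contains every commutator. So
the order of a commutator is prime to every `p ∣ n`, and the commutator is trivial.

Conversely, if every group of order `n` is abelian, so is every group whose order divides `n`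
(multiply by a cyclic group). A unit `u ≠ 1` with `u ^ k = 1` in a finite ring `R` yields the
nonabelian group `R ⋊ ⟨u⟩`, whose order divides `|R| k`. The unit `1 + p` of `ℤ/p²` rules out
`p³ ∣ n`, and an element of order `p` in `𝔽_{q^k}ˣ` rules out `p ∣ q^k - 1`.
-/

open Subgroup

def IsAbelianNumber (n : ℕ) : Prop :=
  ∀ (G : Type) [Group G] [Fintype G], Fintype.card G = n → ∀ x y : G, x * y = y * x

theorem IsPGroup.smul_eq_self_of_not_dvd_pow_sub_one {S Q : Type*} [Group S] [Group Q]
    [MulDistribMulAction S Q] [Finite Q] {r q c : ℕ} [Fact r.Prime] (hS : IsPGroup r S)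
    (hq : q.Prime) (hrq : r ≠ q) (hQ : Nat.card Q = q ^ c)
    (h : ∀ k, 1 ≤ k → k ≤ c → ¬ r ∣ q ^ k - 1) (s : S) (x : Q) : s • x = x := by
  let F := FixedPoints.subgroup S Q
  obtain ⟨j, hjc, hF⟩ := (Nat.dvd_prime_pow hq).mp (hQ ▸ F.card_subgroup_dvd_card)
  obtain rfl | hjc := hjc.eq_or_lt
  · have hFtop : F = ⊤ := F.eq_top_of_card_eq (hF.trans hQ.symm)
    exact (hFtop ▸ mem_top x : x ∈ F) s
  · have hmod : q ^ c ≡ q ^ j [MOD r] := hQ ▸ hF ▸ hS.card_modEq_card_fixedPoints Q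
    have hdvd : r ∣ q ^ j * (q ^ (c - j) - 1) := by
      rw [Nat.mul_sub_one, ← pow_add, Nat.add_sub_cancel' hjc.le]
      exact (Nat.modEq_iff_dvd' (Nat.pow_le_pow_right hq.pos hjc.le)).mp hmod.symm
    have hcop : r.Coprime (q ^ j) := ((Nat.coprime_primes Fact.out hq).mpr hrq).pow_right j
    exact absurd (hcop.dvd_of_dvd_mul_left hdvd) (h (c - j) (by omega) (by omega))

theorem Subgroup.normalizer_le_centralizer_of_not_dvd_pow_sub_one {G : Type*} [Group G] [Finite G]
    {p a : ℕ} [Fact p.Prime] (H : Subgroup G) (hH : Nat.card H = p ^ a) (hHi : ¬ p ∣ H.index)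
    (hHC : H ≤ centralizer (H : Set G))
    (h : ∀ r ∈ (Nat.card G).primeFactors, r ≠ p → ∀ k, 1 ≤ k → k ≤ a → ¬ r ∣ p ^ k - 1) :
    normalizer (H : Set G) ≤ centralizer (H : Set G) := by
  suffices hC : (centralizer (H : Set G)).relIndex (normalizer (H : Set G)) = 1 by
    intro g hg
    exact mem_subgroupOf.mp (index_eq_one.mp hC ▸ mem_top (⟨g, hg⟩ : normalizer (H : Set G)))
  refine Nat.eq_one_iff_not_exists_prime_dvd.mpr fun r hr hrC => ?_
  have := Fact.mk hr
  obtain rfl | hrp := eq_or_ne r p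
  · exact hHi (hrC.trans
      ((relIndex_dvd_of_le_left _ hHC).trans (relIndex_dvd_index_of_le le_normalizer)))
  have hrG : r ∈ (Nat.card G).primeFactors := Nat.mem_primeFactors_of_ne_zero Nat.card_pos.ne'
    |>.mpr ⟨hr, hrC.trans ((index_dvd_card _).trans (card_subgroup_dvd_card _))⟩
  obtain ⟨R⟩ : Nonempty (Sylow r (normalizer (H : Set G))) := inferInstance
  have hRC : (R : Subgroup _) ≤ (centralizer (H : Set G)).subgroupOf (normalizer (H : Set G)) := by
    intro s hs
    have hfix := R.isPGroup'.smul_eq_self_of_not_dvd_pow_sub_one Fact.out hrp hH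
      (h r hrG hrp) ⟨s, hs⟩
    rw [mem_subgroupOf, mem_centralizer_iff]
    intro x hx
    have := congrArg Subtype.val (hfix ⟨x, hx⟩)
    rw [mk_smul] at this
    simp only [HSMul.hSMul, smul_coe, InvMemClass.coe_inv, mul_inv_eq_iff_eq_mul] at this
    exact this.symm
  exact R.not_dvd_index (hrC.trans (index_dvd_of_le hRC))

theorem isMulCommutative_of_card_eq_prime_pow_of_le_two {H : Type*} [Group H] {p a : ℕ}
    [Fact p.Prime] (hH : Nat.card H = p ^ a) (ha : a ≤ 2) : IsMulCommutative H := by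
  interval_cases a
  · have := (Nat.card_eq_one_iff_unique.mp (by simpa using hH)).1
    exact ⟨⟨fun _ _ => Subsingleton.elim _ _⟩⟩
  · have := isCyclic_of_prime_card (by simpa using hH)
    exact IsCyclic.isMulCommutative
  · exact IsPGroup.isMulCommutative_of_card_eq_prime_sq hH

open scoped commutatorElement in
theorem isAbelianNumber_of_cubefree_of_hasNilpotentFactorization {n : ℕ}
    (hcube : ∀ p : ℕ, p.Prime → ¬ p ^ 3 ∣ n) (hnf : HasNilpotentFactorization n) :
    IsAbelianNumber n := by
  intro G _ _ hG x y
  rw [← Nat.card_eq_fintype_card] at hG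
  subst hG
  rw [← commutatorElement_eq_one_iff_mul_comm, ← orderOf_eq_one_iff,
    Nat.eq_one_iff_not_exists_prime_dvd]
  intro p hp hpx
  have := Fact.mk hp
  have hpG : p ∈ (Nat.card G).primeFactors := Nat.mem_primeFactors_of_ne_zero Nat.card_pos.ne'
    |>.mpr ⟨hp, hpx.trans (orderOf_dvd_natCard _)⟩
  obtain ⟨P⟩ : Nonempty (Sylow p G) := inferInstance
  have : IsMulCommutative P := isMulCommutative_of_card_eq_prime_pow_of_le_two
    P.card_eq_multiplicity <| by
      by_contra! h
      exact hcube p hp ((hp.pow_dvd_iff_le_factorization Nat.card_pos.ne').mpr h)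
  have hPC := (P : Subgroup G).le_centralizer
  have hNC := (P : Subgroup G).normalizer_le_centralizer_of_not_dvd_pow_sub_one
    P.card_eq_multiplicity P.not_dvd_index hPC fun r hr hrp => hnf r hr p hpG hrp
  have hker : ⁅x, y⁆ ∈ (MonoidHom.transferSylow P hNC).ker := by
    rw [MonoidHom.mem_ker, map_commutatorElement, commutatorElement_eq_one_iff_mul_comm]
    exact Subtype.ext (hPC (Subtype.prop _) _ (Subtype.prop _))
  exact MonoidHom.not_dvd_card_ker_transferSylow P hNC
    (hpx.trans (Subgroup.orderOf_dvd_natCard _ hker))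

theorem one_add_pow_of_mul_self_eq_zero {R : Type*} [Ring R] {x : R} (hx : x * x = 0) (n : ℕ) :
    (1 + x) ^ n = 1 + n * x := by
  induction n with
  | zero => simp
  | succ n ih => rw [pow_succ, ih, Nat.cast_succ]; noncomm_ring; simp [hx]

instance SemidirectProduct.instFinite {N G : Type*} [Group N] [Group G] [Finite N] [Finite G]
    {φ : G →* MulAut N} : Finite (N ⋊[φ] G) :=
  Finite.of_equiv _ SemidirectProduct.equivProd.symm

def Units.toMulAutMultiplicative (R : Type*) [Ring R] : Rˣ →* MulAut (Multiplicative R) where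
  toFun u := AddEquiv.toMultiplicative (DistribMulAction.toAddEquiv R u)
  map_one' := by ext; simp
  map_mul' u v := by ext; simp [mul_smul]

namespace IsAbelianNumber

variable {n : ℕ}

theorem of_dvd (h : IsAbelianNumber n) (hn : n ≠ 0) {d : ℕ} (hd : d ∣ n) : IsAbelianNumber d := by
  intro H _ _ hH x y
  obtain ⟨m, rfl⟩ := hd
  have : NeZero m := ⟨right_ne_zero_of_mul hn⟩
  exact congrArg Prod.fst (h (H × Multiplicative (ZMod m)) (by simp [hH]) (x, 1) (y, 1))

theorem mul_comm_of_card_dvd (h : IsAbelianNumber n) (hn : n ≠ 0) {H : Type} [Group H] [Finite H]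
    (hH : Nat.card H ∣ n) (x y : H) : x * y = y * x :=
  have := Fintype.ofFinite H
  h.of_dvd hn hH H Nat.card_eq_fintype_card.symm x y

theorem eq_one_of_pow_eq_one (h : IsAbelianNumber n) (hn : n ≠ 0) {R : Type} [Ring R] [Finite R]
    {u : Rˣ} {k : ℕ} (hu : u ^ k = 1) (hk : Nat.card R * k ∣ n) : u = 1 := by
  let φ := (Units.toMulAutMultiplicative R).comp (zpowers u).subtype
  have hcard : Nat.card (Multiplicative R ⋊[φ] zpowers u) ∣ n := by
    rw [SemidirectProduct.card, Nat.card_zpowers]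
    exact (mul_dvd_mul_left _ (orderOf_dvd_of_pow_eq_one hu)).trans hk
  have hcomm := h.mul_comm_of_card_dvd hn hcard (.inr ⟨u, mem_zpowers u⟩) (.inl (.ofAdd 1))
  have hfix : φ ⟨u, mem_zpowers u⟩ (.ofAdd 1) = .ofAdd 1 := by
    apply SemidirectProduct.inl_injective (G := zpowers u) (φ := φ)
    rw [SemidirectProduct.inl_aut, hcomm, map_inv, mul_inv_cancel_right]
  apply Units.ext
  simpa [φ, Units.toMulAutMultiplicative, Units.smul_def] using congrArg Multiplicative.toAdd hfix

theorem not_prime_pow_three_dvd (h : IsAbelianNumber n) (hn : n ≠ 0) {p : ℕ} (hp : p.Prime) :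
    ¬ p ^ 3 ∣ n := by
  intro hdvd
  have : NeZero (p ^ 2) := ⟨pow_ne_zero 2 hp.ne_zero⟩
  have hp2 : (p * p : ZMod (p ^ 2)) = 0 := by rw [← Nat.cast_mul, ← sq, ZMod.natCast_self]
  have hx : (1 + p : ZMod (p ^ 2)) ^ p = 1 := by
    rw [one_add_pow_of_mul_self_eq_zero hp2, hp2, add_zero]
  have hu := h.eq_one_of_pow_eq_one hn (Units.pow_ofPowEqOne hx hp.ne_zero)
    (by rwa [Nat.card_zmod, ← pow_succ])
  have : ((p : ℕ) : ZMod (p ^ 2)) = 0 := by simpa using congrArg Units.val hu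
  have := Nat.le_of_dvd hp.pos ((ZMod.natCast_eq_zero_iff _ _).mp this)
  nlinarith [hp.two_le]

theorem not_dvd_prime_pow_sub_one (h : IsAbelianNumber n) (hn : n ≠ 0) {p q k : ℕ}
    (hp : p.Prime) (hq : q.Prime) (hk : k ≠ 0) (hdvd : q ^ k * p ∣ n) : ¬ p ∣ q ^ k - 1 := by
  intro hpdvd
  have := Fact.mk hp
  have := Fact.mk hq
  have hF := GaloisField.card q k hk
  obtain ⟨u, hu⟩ := exists_prime_orderOf_dvd_card' (G := (GaloisField q k)ˣ) p
    (by rwa [Nat.card_units, hF])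
  have := h.eq_one_of_pow_eq_one hn (hu ▸ pow_orderOf_eq_one u) (by rwa [hF])
  rw [this, orderOf_one] at hu
  exact hp.one_lt.ne' hu.symm

theorem hasNilpotentFactorization (h : IsAbelianNumber n) (hn : n ≠ 0) :
    HasNilpotentFactorization n := by
  intro p hp q hq hpq k hk1 hk2
  have hp' := Nat.prime_of_mem_primeFactors hp
  have hq' := Nat.prime_of_mem_primeFactors hq
  refine h.not_dvd_prime_pow_sub_one hn hp' hq' (by omega) ?_
  refine Nat.Coprime.mul_dvd_of_dvd_of_dvd ?_ ((hq'.pow_dvd_iff_le_factorization hn).mpr hk2)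
    (Nat.dvd_of_mem_primeFactors hp)
  exact ((Nat.coprime_primes hq' hp').mpr hpq.symm).pow_left k

end IsAbelianNumber

/-- A positive integer `n` is an abelian number (every group of order `n` is abelian)
iff `n` is cube-free and has nilpotent factorization. -/
theorem abelian_number_iff_cubefree_nilpotentFactorization (n : ℕ) (hn : 0 < n) :
    (∀ (G : Type) [Group G] [Fintype G], Fintype.card G = n →
        ∀ x y : G, x * y = y * x) ↔
      ((∀ p : ℕ, p.Prime → ¬ (p ^ 3 ∣ n)) ∧ HasNilpotentFactorization n) :=
  ⟨fun (h : IsAbelianNumber n) =>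
      ⟨fun _ hp => h.not_prime_pow_three_dvd hn.ne' hp, h.hasNilpotentFactorization hn.ne'⟩,
    fun ⟨hcube, hnf⟩ => isAbelianNumber_of_cubefree_of_hasNilpotentFactorization hcube hnf⟩
end

section
/- If G is any finite solvable group and π is any set of primes, then G has a Hall π-subgroup. -/
/-!
Induction on `|G|`. A nontrivial solvable group has a nontrivial normal `p`-subgroup `N` (a Sylow
subgroup of the last nontrivial term of the derived series). Take a Hall `π`-subgroup `K` of
`G/N` and its preimage `K₀`. If `p ∈ π`, then `K₀` is a Hall `π`-subgroup of `G`. If `p ∉ π`,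
then `|G : K₀|` is a `π'`-number: when `K₀ < G`, a Hall `π`-subgroup of `K₀` is one of `G`;
when `K₀ = G`, `N` is a normal Hall `π'`-subgroup and a Schur–Zassenhaus complement of it works.
-/

open Subgroup

def IsPiNumber (π : Set ℕ) (n : ℕ) : Prop :=
  ∀ q : ℕ, q.Prime → q ∣ n → q ∈ π

def Subgroup.IsHall {G : Type*} [Group G] (π : Set ℕ) (H : Subgroup G) : Prop :=
  IsPiNumber π (Nat.card H) ∧ IsPiNumber πᶜ H.index

section PiNumber

variable {π : Set ℕ}

lemma isPiNumber_one (π : Set ℕ) : IsPiNumber π 1 :=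
  fun _ hq hdvd => absurd (Nat.dvd_one.mp hdvd) hq.ne_one

lemma IsPiNumber.mul {m n : ℕ} (hm : IsPiNumber π m) (hn : IsPiNumber π n) :
    IsPiNumber π (m * n) :=
  fun q hq hdvd => (hq.dvd_mul.mp hdvd).elim (hm q hq) (hn q hq)

lemma isPiNumber_prime_pow {p : ℕ} (hp : p.Prime) (hpπ : p ∈ π) (a : ℕ) :
    IsPiNumber π (p ^ a) := fun _ hq hdvd =>
  (Nat.prime_dvd_prime_iff_eq hq hp).mp (hq.dvd_of_dvd_pow hdvd) ▸ hpπ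

lemma IsPiNumber.coprime {m n : ℕ} (hm : IsPiNumber π m) (hn : IsPiNumber πᶜ n) :
    m.Coprime n :=
  Nat.coprime_of_dvd fun q hq hqm hqn => hn q hq hqn (hm q hq hqm)

lemma IsPGroup.isPiNumber_card {p : ℕ} [Fact p.Prime] {G : Type*} [Group G] [Finite G]
    (hG : IsPGroup p G) (hp : p ∈ π) : IsPiNumber π (Nat.card G) := by
  obtain ⟨a, ha⟩ := hG.exists_card_eq
  exact ha ▸ isPiNumber_prime_pow Fact.out hp a

end PiNumber

section Solvable

variable {G : Type*} [Group G]

lemma exists_normal_ne_bot_isMulCommutative [Group.IsSolvable G] [Nontrivial G] :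
    ∃ A : Subgroup G, A.Normal ∧ A ≠ ⊥ ∧ IsMulCommutative A := by
  obtain ⟨n, hn⟩ := Group.IsSolvable.solvable (G := G)
  by_contra! h
  suffices ∀ k, derivedSeries G k ≠ ⊥ from this n hn
  intro k
  induction k with
  | zero => simp [derivedSeries_zero]
  | succ k ih =>
    rw [derivedSeries_succ]
    exact fun hk => h _ (derivedSeries_normal G k) ih (commutator_self_eq_bot_iff.mp hk)

lemma exists_characteristic_ne_bot_isPGroup [Finite G] [IsMulCommutative G] [Nontrivial G] :
    ∃ p, p.Prime ∧ ∃ P : Subgroup G, P.Characteristic ∧ P ≠ ⊥ ∧ IsPGroup p P := by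
  obtain ⟨p, hp, hdvd⟩ := Nat.exists_prime_and_dvd (Finite.one_lt_card (α := G)).ne'
  have := Fact.mk hp
  obtain ⟨P⟩ : Nonempty (Sylow p G) := Sylow.nonempty
  exact ⟨p, hp, P, P.characteristic_of_normal inferInstance, P.ne_bot_of_dvd_card hdvd, P.2⟩

lemma exists_normal_ne_bot_isPGroup_of_isSolvable [Finite G] [Group.IsSolvable G] [Nontrivial G] :
    ∃ p, p.Prime ∧ ∃ N : Subgroup G, N.Normal ∧ N ≠ ⊥ ∧ IsPGroup p N := by
  obtain ⟨A, hA, hA1, hAcomm⟩ := exists_normal_ne_bot_isMulCommutative (G := G)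
  have := (nontrivial_iff_ne_bot A).mpr hA1
  obtain ⟨p, hp, P, hP, hP1, hPp⟩ := exists_characteristic_ne_bot_isPGroup (G := A)
  refine ⟨p, hp, P.map A.subtype, inferInstance, ?_, hPp.map A.subtype⟩
  rwa [Ne, map_eq_bot_iff_of_injective _ A.subtype_injective]

end Solvable

namespace Subgroup

variable {G : Type*} [Group G] {π : Set ℕ}

lemma card_lt_card_of_ne_top [Finite G] {H : Subgroup G} (hH : H ≠ ⊤) :
    Nat.card H < Nat.card G := by
  rw [← H.card_mul_index]
  exact lt_mul_of_one_lt_right Nat.card_pos (one_lt_index_of_ne_top hH)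

lemma card_quotient_lt_card_of_ne_bot [Finite G] {N : Subgroup G} [N.Normal]
    (hN : N ≠ ⊥) : Nat.card (G ⧸ N) < Nat.card G := by
  rw [N.card_eq_card_quotient_mul_card_subgroup]
  exact lt_mul_of_one_lt_right Nat.card_pos (N.one_lt_card_iff_ne_bot.mpr hN)

lemma isHall_top_iff : (⊤ : Subgroup G).IsHall π ↔ IsPiNumber π (Nat.card G) := by
  simp [IsHall, index_top, isPiNumber_one]

lemma IsHall.comap_mk' {N : Subgroup G} [N.Normal] (hN : IsPiNumber π (Nat.card N))
    {K : Subgroup (G ⧸ N)} (hK : K.IsHall π) : (K.comap (QuotientGroup.mk' N)).IsHall π := by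
  refine ⟨?_, ?_⟩
  · rw [show Nat.card (K.comap (QuotientGroup.mk' N)) = Nat.card N * Nat.card K from
      QuotientGroup.card_preimage_mk N K]
    exact hN.mul hK.1
  · rw [index_comap_of_surjective K (QuotientGroup.mk'_surjective N)]
    exact hK.2

lemma IsHall.map_subtype {K : Subgroup G} (hK : IsPiNumber πᶜ K.index) {H : Subgroup K}
    (hH : H.IsHall π) : (H.map K.subtype).IsHall π := by
  refine ⟨?_, ?_⟩
  · rw [card_map_of_injective K.subtype_injective]
    exact hH.1
  · rw [index_map_subtype]
    exact hH.2.mul hK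

lemma exists_isHall_complement {N : Subgroup G} [N.Normal] (hN : IsPiNumber πᶜ (Nat.card N))
    (hQ : IsPiNumber π N.index) : ∃ H : Subgroup G, N.IsComplement' H ∧ H.IsHall π := by
  obtain ⟨H, hH⟩ := exists_right_complement'_of_coprime (hQ.coprime hN).symm
  refine ⟨H, hH, ?_, ?_⟩
  · rwa [← hH.symm.index_eq_card]
  · rwa [hH.index_eq_card]

end Subgroup

theorem Subgroup.exists_isHall_of_isSolvable (π : Set ℕ) (G : Type*) [Group G] [Finite G]
    [Group.IsSolvable G] : ∃ H : Subgroup G, H.IsHall π := by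
  induction hn : Nat.card G using Nat.strong_induction_on generalizing G with
  | _ n ih =>
  rcases subsingleton_or_nontrivial G with hG | hG
  · exact ⟨⊤, isHall_top_iff.mpr (Nat.card_of_subsingleton (1 : G) ▸ isPiNumber_one π)⟩
  obtain ⟨p, hp, N, hN, hN1, hNp⟩ := exists_normal_ne_bot_isPGroup_of_isSolvable (G := G)
  have := Fact.mk hp
  obtain ⟨K, hK⟩ := ih _ (hn ▸ card_quotient_lt_card_of_ne_bot hN1) (G ⧸ N) rfl
  by_cases hpπ : p ∈ π
  · exact ⟨_, hK.comap_mk' (hNp.isPiNumber_card hpπ)⟩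
  have hNπ' : IsPiNumber πᶜ (Nat.card N) := hNp.isPiNumber_card hpπ
  by_cases hKtop : K = ⊤
  · subst hKtop
    obtain ⟨H, -, hH⟩ := exists_isHall_complement hNπ' (N.index_eq_card ▸ isHall_top_iff.mp hK)
    exact ⟨H, hH⟩
  set K₀ := K.comap (QuotientGroup.mk' N)
  have hK₀ : K₀ ≠ ⊤ := by
    rwa [Ne, ← comap_top (QuotientGroup.mk' N),
      (comap_injective (QuotientGroup.mk'_surjective N)).eq_iff]
  have hK₀π' : IsPiNumber πᶜ K₀.index :=
    (index_comap_of_surjective K (QuotientGroup.mk'_surjective N)).symm ▸ hK.2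
  obtain ⟨H, hH⟩ := ih _ (hn ▸ card_lt_card_of_ne_top hK₀) K₀ rfl
  exact ⟨_, hH.map_subtype hK₀π'⟩

theorem exists_hall_subgroup_of_solvable_general (G : Type*) [Group G] [Finite G] [Group.IsSolvable G]
    (π : Set ℕ) :
    ∃ H : Subgroup G,
      (∀ q : ℕ, q.Prime → q ∣ Nat.card H → q ∈ π) ∧
        (∀ q : ℕ, q.Prime → q ∣ H.index → q ∉ π) :=
  Subgroup.exists_isHall_of_isSolvable π G

/-- (P. Hall) Every finite solvable group has a Hall `π`-subgroup, for any set of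
primes `π`: a subgroup `H` such that every prime dividing `|H|` lies in `π` and no prime
dividing `|G : H|` lies in `π`. -/
theorem exists_hall_subgroup_of_solvable (G : Type*) [Group G] [Finite G] [Group.IsSolvable G]
    (π : Set ℕ) (hπ : ∀ q ∈ π, Nat.Prime q) :
    ∃ H : Subgroup G,
      (∀ q : ℕ, q.Prime → q ∣ Nat.card H → q ∈ π) ∧
        (∀ q : ℕ, q.Prime → q ∣ H.index → q ∉ π) :=
  exists_hall_subgroup_of_solvable_general G π
end

section
/- Let G be a finite group that is not nilpotent, but such that every proper maximal subgroup of G is nilpotent. Then the order of G is divisible by exactly two distinct primes; that is, |G| = p^m q^n with m, n > 0 for distinct primes p and q. -/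
/-!
Every proper subgroup of `G` is nilpotent. First, `G` is not perfect. Otherwise a smallest
counterexample is simple, because a perfect quotient inherits the hypotheses. In such a simple
group two distinct maximal subgroups meet trivially: the normalizer of a largest nontrivial
intersection `D = K ⊓ L` lies in a maximal subgroup `C`, and the normalizer condition in the
nilpotent groups `K` and `L` makes `C ⊓ K` and `C ⊓ L` strictly larger than `D`, forcing
`K = C = L`. Maximal subgroups `M` are also nontrivial and self-normalizing, as `G` is simple
and not cyclic, so the nontrivial elements of the conjugates of `M` number
`|G| - [G : M] ≥ |G| / 2`. Two non-conjugate classes of maximal subgroups would then contain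
more than `|G| - 1` nontrivial elements, and a single class cannot cover `G`.

Hence a maximal subgroup `M` contains `[G, G]`, so it is normal of prime index `p`. For `q ≠ p`
a Sylow `q`-subgroup `Q` lies in the nilpotent group `M`, so it is normal by Frattini's
argument. If a third prime divided `|G|`, each `P ⊔ Q` with `P` a Sylow `p`-subgroup would be
proper, hence nilpotent, so every `Q` would normalize `P`. Then `P` is normal too, and `G` is
nilpotent.
-/

open Subgroup Pointwise MulAction

namespace Subgroup

variable {G : Type*} [Group G]

theorem isNilpotent_of_ne_top [IsCoatomic (Subgroup G)]
    (hmax : ∀ K : Subgroup G, IsCoatom K → Group.IsNilpotent K) {H : Subgroup G}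
    (hH : H ≠ ⊤) : Group.IsNilpotent H := by
  obtain ⟨K, hK, hHK⟩ := (eq_top_or_exists_le_coatom H).resolve_left hH
  have := hmax K hK
  exact Group.nilpotent_of_mulEquiv (subgroupOfEquivOfLe hHK)

theorem lt_normalizer_inf_of_lt {D H : Subgroup G} [Group.IsNilpotent H] (hDH : D < H) :
    D < normalizer (D : Set G) ⊓ H := by
  have hD : D.subgroupOf H < ⊤ := by
    rw [lt_top_iff_ne_top, Ne, subgroupOf_eq_top]
    exact hDH.not_ge
  have := Group.normalizerCondition_of_isNilpotent _ hD
  rwa [← subgroupOf_normalizer_eq hDH.le, ← map_lt_map_iff_of_injective H.subtype_injective,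
    subgroupOf_map_subtype, subgroupOf_map_subtype, inf_of_le_left hDH.le] at this

theorem le_of_coprime_card_index {H N : Subgroup G} [N.Normal]
    (h : (Nat.card H).Coprime N.index) : H ≤ N :=
  relIndex_eq_one.mp <| Nat.eq_one_of_dvd_coprimes h (N.relIndex_dvd_card H)
    (N.relIndex_dvd_index_of_normal H)

theorem card_dvd_card_mul_card_of_sup_eq_top {H K : Subgroup G} [K.Normal] (h : H ⊔ K = ⊤) :
    Nat.card G ∣ Nat.card K * Nat.card H := by
  rw [← K.card_mul_index, ← relIndex_top_right, ← h, relIndex_sup_right]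
  exact mul_dvd_mul_left _ (K.relIndex_dvd_card H)

theorem sup_ne_top_of_prime_dvd_card [Finite G] {p q r : ℕ} [Fact p.Prime] [Fact q.Prime]
    {P Q : Subgroup G} [Q.Normal] (hP : IsPGroup p P) (hQ : IsPGroup q Q) (hr : r.Prime)
    (hrG : r ∣ Nat.card G) (hrp : r ≠ p) (hrq : r ≠ q) : P ⊔ Q ≠ ⊤ := by
  intro h
  obtain ⟨a, ha⟩ := hP.exists_card_eq
  obtain ⟨b, hb⟩ := hQ.exists_card_eq
  have := hrG.trans (card_dvd_card_mul_card_of_sup_eq_top h)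
  rw [ha, hb] at this
  rcases hr.dvd_mul.mp this with h | h
  · exact hrq ((Nat.prime_dvd_prime_iff_eq hr Fact.out).mp (hr.dvd_of_dvd_pow h))
  · exact hrp ((Nat.prime_dvd_prime_iff_eq hr Fact.out).mp (hr.dvd_of_dvd_pow h))

theorem eq_top_of_forall_exists_sylow_le [Finite G] {H : Subgroup G}
    (h : ∀ (p : ℕ) [Fact p.Prime], ∃ P : Sylow p G, (P : Subgroup G) ≤ H) : H = ⊤ := by
  rw [← index_eq_one]
  by_contra hH
  obtain ⟨p, hp, hpH⟩ := Nat.exists_prime_and_dvd hH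
  have := Fact.mk hp
  obtain ⟨P, hPH⟩ := h p
  exact P.not_dvd_index (hpH.trans (index_dvd_of_le hPH))

theorem index_prime_of_commutator_le {M : Subgroup G} (hM : IsCoatom M)
    (h : _root_.commutator G ≤ M) : M.index.Prime := by
  have := Normal.of_commutator_le (G := G) h
  have := Normal.quotient_commutative_iff_commutator_le.mpr h
  have : IsSimpleOrder (Subgroup (G ⧸ M)) :=
    (OrderIso.isSimpleOrder_iff (β := Set.Ici M) (QuotientGroup.comapMk'OrderIso M)).mpr
      (Set.isSimpleOrder_Ici_iff_isCoatom.mpr hM)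
  have : Nontrivial (G ⧸ M) := Subgroup.nontrivial_iff.mp inferInstance
  exact Group.is_simple_iff_prime_card.mp ⟨fun N _ => IsSimpleOrder.eq_bot_or_eq_top N⟩

theorem normalizer_eq_self_of_isCoatom {M : Subgroup G} (hM : IsCoatom M) (hn : ¬ M.Normal) :
    normalizer (M : Set G) = M :=
  (hM.le_iff_eq fun h => hn (normalizer_eq_top_iff.mp h)).mp le_normalizer

theorem isCyclic_of_isCoatom_bot (h : IsCoatom (⊥ : Subgroup G)) : IsCyclic G := by
  have : Nontrivial G := nontrivial_iff.mp ⟨⊥, ⊤, h.1⟩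
  obtain ⟨x, hx⟩ := exists_ne (1 : G)
  exact isCyclic_iff_exists_zpowers_eq_top.mpr
    ⟨x, h.2 _ (bot_lt_iff_ne_bot.mpr (zpowers_ne_bot.mpr hx))⟩

theorem exists_isCoatom_mem [IsCoatomic (Subgroup G)] (h : ¬ IsCyclic G) (x : G) :
    ∃ K : Subgroup G, IsCoatom K ∧ x ∈ K := by
  obtain ⟨K, hK, hxK⟩ := (eq_top_or_exists_le_coatom (zpowers x)).resolve_left
    fun hx => h (isCyclic_iff_exists_zpowers_eq_top.mpr ⟨x, hx⟩)
  exact ⟨K, hK, hxK (mem_zpowers x)⟩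

theorem isCoatom_of_mem_orbit_conjAct {M K : Subgroup G} (hM : IsCoatom M)
    (hK : K ∈ orbit (ConjAct G) M) : IsCoatom K := by
  obtain ⟨g, rfl⟩ := hK
  exact ((MulDistribMulAction.toMulAut _ _ g).mapSubgroup.isCoatom_iff M).mpr hM

theorem index_stabilizer_conjAct (H : Subgroup G) :
    (stabilizer (ConjAct G) H).index = (normalizer (H : Set G)).index := by
  have : stabilizer (ConjAct G) H =
      (normalizer (H : Set G)).comap (ConjAct.ofConjAct : ConjAct G ≃* G).toMonoidHom := by
    ext g
    exact conjAct_pointwise_smul_iff (g := ConjAct.ofConjAct g)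
  rw [this, index_comap_of_surjective _ (MulEquiv.surjective _)]

def conjugatesUnionDiffOne (H : Subgroup G) : Set G :=
  ⋃ K ∈ orbit (ConjAct G) H, (K : Set G) \ {1}

theorem conjugatesUnionDiffOne_subset (H : Subgroup G) : conjugatesUnionDiffOne H ⊆ {1}ᶜ :=
  Set.iUnion₂_subset fun _ _ => Set.sdiff_subset_compl _ _

theorem ncard_conjugatesUnionDiffOne_add_index [Finite G] {M : Subgroup G}
    (hM : normalizer (M : Set G) = M) (hTI : (orbit (ConjAct G) M).Pairwise Disjoint) :
    (conjugatesUnionDiffOne M).ncard + M.index = Nat.card G := by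
  have hcard : ∀ K ∈ orbit (ConjAct G) M, ((K : Set G) \ {1}).ncard = Nat.card M - 1 := by
    rintro _ ⟨g, rfl⟩
    rw [Set.ncard_sdiff_singleton_of_mem (one_mem _), ← Nat.card_coe_set_eq]
    exact congrArg (· - 1) (Nat.card_congr (equivSMul g M).toEquiv.symm)
  have hpair : (orbit (ConjAct G) M).PairwiseDisjoint fun K : Subgroup G => (K : Set G) \ {1} :=
    hTI.mono' fun K L hKL => Set.disjoint_left.mpr fun x hxK hxL =>
      hxK.2 (disjoint_def.mp hKL hxK.1 hxL.1)
  rw [conjugatesUnionDiffOne,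
    Set.Finite.ncard_biUnion (Set.toFinite _) (fun _ _ => Set.toFinite _) hpair,
    finsum_mem_congr rfl hcard, finsum_mem_eq_finite_toFinset_sum _ (Set.toFinite _),
    Finset.sum_const, smul_eq_mul, ← Set.ncard_eq_toFinset_card _, ← index_stabilizer,
    index_stabilizer_conjAct, hM, ← M.card_mul_index, Nat.mul_sub_one, Nat.mul_comm]
  exact Nat.sub_add_cancel (Nat.le_mul_of_pos_left _ Nat.card_pos)

theorem disjoint_conjugatesUnionDiffOne {M K : Subgroup G}
    (hTI : (orbit (ConjAct G) M ∪ orbit (ConjAct G) K).Pairwise Disjoint)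
    (hKM : K ∉ orbit (ConjAct G) M) :
    Disjoint (conjugatesUnionDiffOne M) (conjugatesUnionDiffOne K) := by
  simp only [Set.disjoint_left, conjugatesUnionDiffOne, Set.mem_iUnion₂]
  rintro y ⟨L, hL, hyL, hy1⟩ ⟨L', hL', hyL', -⟩
  obtain rfl : L = L' := by
    by_contra hne
    exact hy1 (disjoint_def.mp (hTI (Or.inl hL) (Or.inr hL') hne) hyL hyL')
  exact hKM (orbit_eq_iff.mpr hL ▸ mem_orbit_symm.mp hL')

theorem not_pairwise_disjoint_isCoatom [Finite G] (hcyc : ¬ IsCyclic G)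
    (hself : ∀ M : Subgroup G, IsCoatom M → normalizer (M : Set G) = M) :
    ¬ {K : Subgroup G | IsCoatom K}.Pairwise Disjoint := by
  intro hTI
  have horbit : ∀ M : Subgroup G, IsCoatom M → orbit (ConjAct G) M ⊆ {K | IsCoatom K} :=
    fun M hM _ => isCoatom_of_mem_orbit_conjAct hM
  have hcount : ∀ M : Subgroup G, IsCoatom M →
      (conjugatesUnionDiffOne M).ncard + M.index = Nat.card G :=
    fun M hM => ncard_conjugatesUnionDiffOne_add_index (hself M hM) (hTI.mono (horbit M hM))
  have hindex : ∀ M : Subgroup G, IsCoatom M →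
      2 ≤ M.index ∧ 2 * M.index ≤ Nat.card G := by
    intro M hM
    refine ⟨one_lt_index_of_ne_top hM.1, ?_⟩
    rw [← M.card_mul_index]
    exact Nat.mul_le_mul_right _ ((one_lt_card_iff_ne_bot M).mpr
      fun h => hcyc (isCyclic_of_isCoatom_bot (h ▸ hM)))
  have hcompl : ({1}ᶜ : Set G).ncard = Nat.card G - 1 := by
    rw [Set.compl_eq_univ_sdiff, Set.ncard_sdiff_singleton_of_mem (Set.mem_univ _),
      Set.ncard_univ]
  obtain ⟨M, hM, -⟩ := exists_isCoatom_mem hcyc 1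
  obtain ⟨x, hx1, hxM⟩ : ∃ x : G, x ≠ 1 ∧ x ∉ conjugatesUnionDiffOne M := by
    by_contra! h
    have := Set.ncard_le_ncard (s := {1}ᶜ) h
    have := hcount M hM
    have := hindex M hM
    omega
  obtain ⟨K, hK, hxK⟩ := exists_isCoatom_mem hcyc x
  have hdisj := disjoint_conjugatesUnionDiffOne
    (hTI.mono (Set.union_subset (horbit M hM) (horbit K hK)))
    fun hKM => hxM (Set.mem_biUnion hKM ⟨hxK, hx1⟩)
  have := Set.ncard_le_ncard (Set.union_subset (conjugatesUnionDiffOne_subset M)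
    (conjugatesUnionDiffOne_subset K))
  rw [Set.ncard_union_eq hdisj] at this
  have := hcount M hM
  have := hcount K hK
  have := hindex M hM
  have := hindex K hK
  omega

end Subgroup

namespace Sylow

variable {G : Type*} [Group G] {p : ℕ} [Fact p.Prime]

theorem le_normalizer_of_le (P : Sylow p G) {H : Subgroup G} [Finite H] [Group.IsNilpotent H]
    (hP : (P : Subgroup G) ≤ H) : H ≤ normalizer (P : Set G) := by
  have : ((P : Subgroup G).subgroupOf H).Normal := P.coe_subtype hP ▸ inferInstance
  exact le_normalizer_of_normal_subgroupOf hP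

theorem normal_of_not_dvd_index [Finite G] (P : Sylow p G) {N : Subgroup G} [N.Normal]
    [Group.IsNilpotent N] (hp : ¬ p ∣ N.index) : (P : Subgroup G).Normal := by
  have hPN : (P : Subgroup G) ≤ N := by
    refine le_of_coprime_card_index ?_
    obtain ⟨k, hk⟩ := P.isPGroup'.exists_card_eq
    rw [hk]
    exact ((Nat.Prime.coprime_iff_not_dvd Fact.out).mpr hp).pow_left k
  rw [← normalizer_eq_top_iff, ← P.normalizer_sup_eq_top' hPN,
    sup_of_le_left (P.le_normalizer_of_le hPN)]
  rfl

theorem normal_of_forall_ne_normal [Finite G]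
    (hmax : ∀ H : Subgroup G, IsCoatom H → Group.IsNilpotent H)
    (h3 : 2 < (Nat.card G).primeFactors.card) (P : Sylow p G)
    (hnormal : ∀ (q : ℕ) [Fact q.Prime], q ≠ p → ∀ Q : Sylow q G,
      (Q : Subgroup G).Normal) :
    (P : Subgroup G).Normal := by
  refine normalizer_eq_top_iff.mp (eq_top_of_forall_exists_sylow_le fun q _ => ?_)
  by_cases hq : q = p
  · subst hq
    exact ⟨P, le_normalizer⟩
  let Q : Sylow q G := default
  have := hnormal q hq Q
  obtain ⟨r, hr, hrpq⟩ := Finset.exists_mem_notMem_of_card_lt_card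
    (s := {p, q}) (Finset.card_le_two.trans_lt h3)
  simp only [Finset.mem_insert, Finset.mem_singleton, not_or] at hrpq
  have := isNilpotent_of_ne_top hmax (sup_ne_top_of_prime_dvd_card P.isPGroup' Q.isPGroup'
    (Nat.prime_of_mem_primeFactors hr) (Nat.dvd_of_mem_primeFactors hr) hrpq.1 hrpq.2)
  exact ⟨Q, le_sup_right.trans (P.le_normalizer_of_le le_sup_left)⟩

end Sylow

section MinimalNonNilpotent

variable {G : Type*} [Group G]

theorem isNilpotent_of_isCoatom_of_surjective {Q : Type*} [Group Q] {f : G →* Q}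
    (hf : Function.Surjective f) (hmax : ∀ H : Subgroup G, IsCoatom H → Group.IsNilpotent H)
    {K : Subgroup Q} (hK : IsCoatom K) : Group.IsNilpotent K :=
  have := hmax _ (isCoatom_comap_of_surjective hf hK)
  Group.nilpotent_of_surjective _ (f.subgroupComap_surjective_of_surjective K hf)

theorem exists_isCoatom_inf_lt [Finite G] [IsSimpleGroup G]
    (hmax : ∀ H : Subgroup G, IsCoatom H → Group.IsNilpotent H)
    {K L : Subgroup G} (hK : IsCoatom K) (hL : IsCoatom L) (hKL : K ≠ L)
    (hbot : K ⊓ L ≠ ⊥) :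
    ∃ K' L' : Subgroup G, IsCoatom K' ∧ IsCoatom L' ∧ K' ≠ L' ∧ K ⊓ L < K' ⊓ L' := by
  set D := K ⊓ L
  have hDK : D < K := inf_lt_left.mpr fun h => hKL ((hK.le_iff_eq hL.1).mp h).symm
  have hDL : D < L := inf_lt_right.mpr fun h => hKL ((hL.le_iff_eq hK.1).mp h)
  have hN : normalizer (D : Set G) ≠ ⊤ := fun h =>
    (normalizer_eq_top_iff.mp h).eq_bot_or_eq_top.elim hbot
      fun hD => hK.1 (top_le_iff.mp (hD ▸ hDK.le))
  obtain ⟨C, hC, hNC⟩ := (eq_top_or_exists_le_coatom _).resolve_left hN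
  have grow : ∀ H, IsCoatom H → D < H → D < C ⊓ H := fun H hH hDH =>
    have := hmax H hH
    (lt_normalizer_inf_of_lt hDH).trans_le (inf_le_inf_right _ hNC)
  by_cases hKC : K = C
  · exact ⟨C, L, hC, hL, hKC ▸ hKL, grow L hL hDL⟩
  · exact ⟨C, K, hC, hK, Ne.symm hKC, grow K hK hDK⟩

theorem disjoint_of_isCoatom [Finite G] [IsSimpleGroup G]
    (hmax : ∀ H : Subgroup G, IsCoatom H → Group.IsNilpotent H)
    {K L : Subgroup G} (hK : IsCoatom K) (hL : IsCoatom L) (hKL : K ≠ L) : Disjoint K L := by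
  suffices ∀ D : Subgroup G, ∀ K L : Subgroup G, IsCoatom K → IsCoatom L → K ≠ L →
      K ⊓ L = D → D = ⊥ from disjoint_iff.mpr (this _ K L hK hL hKL rfl)
  intro D
  induction D using WellFoundedGT.induction with
  | _ D ih =>
    rintro K L hK hL hKL rfl
    by_contra hbot
    obtain ⟨K', L', hK', hL', hKL', hlt⟩ := exists_isCoatom_inf_lt hmax hK hL hKL hbot
    exact not_lt_bot (ih _ hlt K' L' hK' hL' hKL' rfl ▸ hlt)

theorem not_isSimpleGroup [Finite G] (hG : ¬ Group.IsNilpotent G)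
    (hmax : ∀ H : Subgroup G, IsCoatom H → Group.IsNilpotent H) : ¬ IsSimpleGroup G := by
  intro _
  have hcyc : ¬ IsCyclic G := fun _ => hG (by let := IsCyclic.commGroup (α := G); infer_instance)
  refine not_pairwise_disjoint_isCoatom hcyc (fun M hM => normalizer_eq_self_of_isCoatom hM
    fun hn => ?_) fun K hK L hL hKL => disjoint_of_isCoatom hmax hK hL hKL
  exact hn.eq_bot_or_eq_top.elim (fun h => hcyc (isCyclic_of_isCoatom_bot (h ▸ hM))) hM.1

theorem subsingleton_of_commutator_eq_top [Finite G]
    (hmax : ∀ H : Subgroup G, IsCoatom H → Group.IsNilpotent H) (hperf : commutator G = ⊤) :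
    Subsingleton G := by
  induction h : Nat.card G using Nat.strong_induction_on generalizing G with
  | _ n ih =>
  by_contra hnt
  rw [not_subsingleton_iff_nontrivial] at hnt
  have hG : ¬ Group.IsNilpotent G := fun _ =>
    (Group.IsSolvable.commutator_lt_top_of_nontrivial G).ne hperf
  obtain ⟨N, hN, hNbot, hNtop⟩ : ∃ N : Subgroup G, N.Normal ∧ N ≠ ⊥ ∧ N ≠ ⊤ := by
    simpa [isSimpleGroup_iff, hnt, not_or] using not_isSimpleGroup hG hmax
  have hsurj := QuotientGroup.mk'_surjective N
  have hperfQ : commutator (G ⧸ N) = ⊤ := by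
    rw [commutator_def, ← (QuotientGroup.mk' N).range_eq_top.mpr hsurj, ← map_commutator_eq,
      hperf, MonoidHom.range_eq_map]
  have hcard : Nat.card (G ⧸ N) < n := by
    rw [← h, card_eq_card_quotient_mul_card_subgroup N]
    exact lt_mul_of_one_lt_right Nat.card_pos ((one_lt_card_iff_ne_bot N).mpr hNbot)
  have := ih _ hcard (fun K hK => isNilpotent_of_isCoatom_of_surjective hsurj hmax hK) hperfQ rfl
  exact hNtop (QuotientGroup.subgroup_eq_top_of_subsingleton N this)

theorem card_primeFactors_le_two [Finite G] (hG : ¬ Group.IsNilpotent G)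
    (hmax : ∀ H : Subgroup G, IsCoatom H → Group.IsNilpotent H) :
    (Nat.card G).primeFactors.card ≤ 2 := by
  by_contra! h3
  obtain ⟨M, hM, hcomm⟩ := (eq_top_or_exists_le_coatom (commutator G)).resolve_left fun hperf =>
    hG (have := subsingleton_of_commutator_eq_top hmax hperf; inferInstance)
  have := Normal.of_commutator_le (G := G) hcomm
  have := hmax M hM
  have hp := index_prime_of_commutator_le hM hcomm
  have hnormal : ∀ (q : ℕ) [Fact q.Prime], q ≠ M.index → ∀ Q : Sylow q G,
      (Q : Subgroup G).Normal := fun q _ hq Q =>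
    Q.normal_of_not_dvd_index (N := M) fun hdvd =>
      hq ((Nat.prime_dvd_prime_iff_eq Fact.out hp).mp hdvd)
  refine hG ((Group.isNilpotent_of_finite_tfae.out 3 0).mp ?_)
  intro q _ Q
  by_cases hq : q = M.index
  · subst hq
    exact Q.normal_of_forall_ne_normal hmax h3 hnormal
  · exact hnormal q hq Q

theorem isNilpotent_of_card_primeFactors_le_one [Finite G]
    (h : (Nat.card G).primeFactors.card ≤ 1) : Group.IsNilpotent G := by
  rcases Nat.le_one_iff_eq_zero_or_eq_one.mp h with h0 | h1
  · have : Nat.card G = 1 := (by simpa using h0 : _ ∨ _).resolve_left Nat.card_pos.ne'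
    have := (Nat.card_eq_one_iff_unique.mp this).1
    infer_instance
  · obtain ⟨p, k, hp, -, hk⟩ := isPrimePow_iff_card_primeFactors_eq_one.mpr h1
    have := Fact.mk hp.nat_prime
    exact (IsPGroup.of_card hk.symm).isNilpotent

end MinimalNonNilpotent

/-- (O. J. Schmidt) If a finite group `G` is not nilpotent but all its maximal subgroups
are nilpotent, then `|G|` is divisible by exactly two distinct primes. -/
theorem schmidt_two_prime_divisors (G : Type*) [Group G] [Finite G]
    (hG : ¬ Group.IsNilpotent G)
    (hmax : ∀ H : Subgroup G, IsCoatom H → Group.IsNilpotent ↥H) :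
    (Nat.card G).primeFactors.card = 2 := by
  have := card_primeFactors_le_two hG hmax
  have := mt isNilpotent_of_card_primeFactors_le_one hG
  omega
end

section
/- If G is a finite solvable group of order p_1^{a_1} ⋯ p_r^{a_r} (p_1, …, p_r distinct primes), then there exists a set of Sylow subgroups P_1, P_2, …, P_r, with P_i a Sylow p_i-subgroup of G, such that P_i P_j = P_j P_i is a subgroup of G for all i ≠ j, and in fact the product P_{i_1} P_{i_2} ⋯ P_{i_k} is a subgroup of G for any subset {i_1, …, i_k} of the indices from 1 to r. -/
open Pointwise

/-!
Hall's theorem: a finite solvable group has a subgroup of every order `m` with `m` coprime to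
`|G| / m`. By induction on `|G|`, take a nontrivial normal subgroup `N` of prime-power order (a
Sylow subgroup of the last nontrivial term of the derived series); `|N|` divides `m` or is coprime
to it. In the first case pull back a Hall subgroup of `G ⧸ N`; in the second, the preimage of a
Hall subgroup of `G ⧸ N` of order `m` has `N` as a normal Hall subgroup, and Schur–Zassenhaus
splits it off.

Given Hall subgroups `Q i` of index `p i ^ a i`, the intersection `D T` of the `Q i` with `i ∈ T`
has index `∏ i ∈ T, p i ^ a i`, because the indices are pairwise coprime. Then `P i = D {i}ᶜ`
is a Sylow subgroup, and for `i ∉ S` the coprime subgroups `P i` and `D Sᶜ` of `D (insert i S)ᶜ`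
meet trivially and have the right orders, so `P i * D Sᶜ = D (insert i S)ᶜ`: every product of
distinct `P i` is some `D T`.
-/

namespace Subgroup

variable {G : Type*} [Group G]

theorem exists_normal_isMulCommutative_ne_bot [Group.IsSolvable G] [Nontrivial G] :
    ∃ A : Subgroup G, A.Normal ∧ A ≠ ⊥ ∧ IsMulCommutative A := by
  classical
  have hsolv := Group.IsSolvable.solvable (G := G)
  have hn : Nat.find hsolv ≠ 0 :=
    (Nat.find_eq_zero hsolv).not.2 (by rw [derivedSeries_zero]; exact top_ne_bot)
  refine ⟨derivedSeries G (Nat.find hsolv - 1), derivedSeries_normal G _,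
    Nat.find_min hsolv (Nat.sub_one_lt hn), ?_⟩
  rw [← commutator_self_eq_bot_iff, ← derivedSeries_succ, Nat.sub_one_add_one hn]
  exact Nat.find_spec hsolv

theorem exists_normal_isPrimePow_card [Finite G] [Group.IsSolvable G] [Nontrivial G] :
    ∃ N : Subgroup G, N.Normal ∧ IsPrimePow (Nat.card N) := by
  obtain ⟨A, hA, hAbot, hAcomm⟩ := exists_normal_isMulCommutative_ne_bot (G := G)
  have hA1 : Nat.card A ≠ 1 := fun h => hAbot (eq_bot_of_card_eq A h)
  set q := (Nat.card A).minFac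
  have hq : q.Prime := Nat.minFac_prime hA1
  have : Fact q.Prime := ⟨hq⟩
  obtain ⟨S⟩ := (inferInstance : Nonempty (Sylow q A))
  have := S.characteristic_of_normal (normal_of_isMulCommutative _)
  refine ⟨(S : Subgroup A).map A.subtype, ConjAct.normal_of_characteristic_of_normal, ?_⟩
  rw [card_subtype, S.card_eq_multiplicity]
  exact ⟨q, _, hq.prime, hq.factorization_pos_of_dvd Nat.card_pos.ne' (Nat.minFac_dvd _), rfl⟩

theorem card_comap_mk' (N : Subgroup G) [N.Normal] (H : Subgroup (G ⧸ N)) :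
    Nat.card (H.comap (QuotientGroup.mk' N)) = Nat.card N * Nat.card H :=
  QuotientGroup.card_preimage_mk N H

theorem exists_card_eq_index_of_coprime [Finite G] {N : Subgroup G} [N.Normal]
    (hN : Nat.Coprime (Nat.card N) N.index) : ∃ H : Subgroup G, Nat.card H = N.index := by
  obtain ⟨H, hH⟩ := exists_right_complement'_of_coprime hN
  exact ⟨H, Nat.eq_of_mul_eq_mul_left Nat.card_pos
    (hH.card_mul_card.trans N.card_mul_index.symm)⟩

theorem exists_card_eq_of_quotient_of_coprime [Finite G] {N : Subgroup G} [N.Normal]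
    {H' : Subgroup (G ⧸ N)} (hcop : Nat.Coprime (Nat.card N) (Nat.card H')) :
    ∃ H : Subgroup G, Nat.card H = Nat.card H' := by
  set K := H'.comap (QuotientGroup.mk' N)
  have hNK : N ≤ K := by
    simpa [K] using ker_le_comap (QuotientGroup.mk' N) H'
  have hcardN : Nat.card (N.subgroupOf K) = Nat.card N :=
    Nat.card_congr (subgroupOfEquivOfLe hNK).toEquiv
  have hindex : (N.subgroupOf K).index = Nat.card H' := by
    refine Nat.eq_of_mul_eq_mul_left (Nat.card_pos (α := N)) ?_
    rw [← card_comap_mk', ← hcardN, card_mul_index]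
  obtain ⟨H, hH⟩ := exists_card_eq_index_of_coprime (N := N.subgroupOf K)
    (by rwa [hcardN, hindex])
  exact ⟨H.map K.subtype, by rw [card_subtype, hH, hindex]⟩

theorem exists_card_eq_of_coprime [Finite G] [Group.IsSolvable G] {m k : ℕ}
    (hcard : Nat.card G = m * k) (hcop : m.Coprime k) : ∃ H : Subgroup G, Nat.card H = m := by
  induction h : Nat.card G using Nat.strong_induction_on generalizing G m k with
  | _ n ih =>
  rcases subsingleton_or_nontrivial G with hG | hG
  · rw [Nat.card_of_subsingleton (1 : G)] at hcard
    exact ⟨⊥, by rw [card_bot, Nat.eq_one_of_mul_eq_one_right hcard.symm]⟩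
  obtain ⟨N, hN, hpow⟩ := exists_normal_isPrimePow_card (G := G)
  have hquot : Nat.card (G ⧸ N) * Nat.card N = m * k := by
    rw [← card_eq_card_quotient_mul_card_subgroup, hcard]
  have hlt : Nat.card (G ⧸ N) < n := by
    rw [← h, card_eq_card_quotient_mul_card_subgroup N]
    exact (Nat.lt_mul_iff_one_lt_right Nat.card_pos).2 hpow.one_lt
  rcases (hcop.isPrimePow_dvd_mul hpow).1 (Dvd.intro_left _ hquot) with
    ⟨m', rfl⟩ | ⟨k', rfl⟩
  · have hquot' : Nat.card (G ⧸ N) = m' * k :=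
      Nat.eq_of_mul_eq_mul_right Nat.card_pos (by rw [hquot]; ring)
    obtain ⟨H', hH'⟩ := ih _ hlt hquot' (Nat.Coprime.coprime_mul_left hcop) rfl
    exact ⟨H'.comap (QuotientGroup.mk' N), by rw [card_comap_mk', hH']⟩
  · have hquot' : Nat.card (G ⧸ N) = m * k' :=
      Nat.eq_of_mul_eq_mul_right Nat.card_pos (by rw [hquot]; ring)
    obtain ⟨H', rfl⟩ := ih _ hlt hquot' (Nat.Coprime.coprime_mul_left_right hcop) rfl
    exact exists_card_eq_of_quotient_of_coprime (Nat.Coprime.coprime_mul_right_right hcop).symm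

theorem exists_index_eq_of_coprime [Finite G] [Group.IsSolvable G] {m k : ℕ}
    (hcard : Nat.card G = m * k) (hcop : m.Coprime k) : ∃ H : Subgroup G, H.index = k := by
  obtain ⟨H, hH⟩ := exists_card_eq_of_coprime hcard hcop
  refine ⟨H, Nat.eq_of_mul_eq_mul_left (hH ▸ Nat.card_pos) ?_⟩
  rw [← hcard, ← hH, card_mul_index]

theorem index_inf_of_coprime {H K : Subgroup G} [H.FiniteIndex] [K.FiniteIndex]
    (hcop : Nat.Coprime H.index K.index) : (H ⊓ K).index = H.index * K.index :=
  le_antisymm index_inf_le <| Nat.le_of_dvd (Nat.pos_of_ne_zero (index_inf_ne_zero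
    FiniteIndex.index_ne_zero FiniteIndex.index_ne_zero)) <|
      hcop.mul_dvd_of_dvd_of_dvd (index_dvd_of_le inf_le_left) (index_dvd_of_le inf_le_right)

theorem coe_mul_coe_eq_of_coprime [Finite G] {H K L : Subgroup G} (hHL : H ≤ L) (hKL : K ≤ L)
    (hcard : Nat.card H * Nat.card K = Nat.card L) (hcop : Nat.Coprime (Nat.card H) (Nat.card K)) :
    (H : Set G) * (K : Set G) = L := by
  ext x
  constructor
  · rintro ⟨h, hh, k, hk, rfl⟩
    exact L.mul_mem (hHL hh) (hKL hk)
  · intro hx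
    let f : H × K → L := fun hk => ⟨hk.1 * hk.2, L.mul_mem (hHL hk.1.2) (hKL hk.2.2)⟩
    have hf : f.Injective := fun _ _ hab =>
      mul_injective_of_disjoint (disjoint_of_coprime_natCard hcop) (congrArg Subtype.val hab)
    have hbij : f.Bijective :=
      (Nat.bijective_iff_injective_and_card f).2 ⟨hf, by rw [Nat.card_prod, hcard]⟩
    obtain ⟨⟨h, k⟩, hhk⟩ := hbij.2 ⟨x, hx⟩
    exact ⟨h, h.2, k, k.2, congrArg Subtype.val hhk⟩

section HallSystem

variable [Finite G] {ι : Type*} {Q : ι → Subgroup G}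

theorem index_finset_inf_of_pairwise_coprime
    (hQ : Pairwise fun i j => Nat.Coprime (Q i).index (Q j).index)
    (T : Finset ι) : (T.inf Q).index = ∏ i ∈ T, (Q i).index := by
  classical
  induction T using Finset.induction_on with
  | empty => simp
  | insert i T hi ih =>
    have hcop : Nat.Coprime (Q i).index (T.inf Q).index := by
      rw [ih]
      exact Nat.Coprime.prod_right fun j hj => hQ (ne_of_mem_of_not_mem hj hi).symm
    rw [Finset.inf_insert, Finset.prod_insert hi, index_inf_of_coprime hcop, ih]

variable [Fintype ι] [DecidableEq ι]

theorem card_finset_inf_of_pairwise_coprime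
    (hQ : Pairwise fun i j => Nat.Coprime (Q i).index (Q j).index)
    (hprod : ∏ i, (Q i).index = Nat.card G) (T : Finset ι) :
    Nat.card (T.inf Q : Subgroup G) = ∏ i ∈ Tᶜ, (Q i).index := by
  refine Nat.eq_of_mul_eq_mul_right (Nat.pos_of_ne_zero (T.inf Q).index_ne_zero_of_finite) ?_
  rw [card_mul_index, index_finset_inf_of_pairwise_coprime hQ, Finset.prod_compl_mul_prod, hprod]

theorem coe_list_prod_finset_inf_compl_singleton
    (hQ : Pairwise fun i j => Nat.Coprime (Q i).index (Q j).index)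
    (hprod : ∏ i, (Q i).index = Nat.card G) (l : List ι) (hl : l.Nodup) :
    (l.map fun i => (((({i}ᶜ : Finset ι).inf Q : Subgroup G)) : Set G)).prod =
      ((l.toFinsetᶜ.inf Q : Subgroup G) : Set G) := by
  induction l with
  | nil =>
    have hbot : (List.nil : List ι).toFinsetᶜ.inf Q = ⊥ :=
      eq_bot_of_card_eq _ (by simp [card_finset_inf_of_pairwise_coprime hQ hprod])
    rw [hbot, List.map_nil, List.prod_nil, coe_bot, Set.singleton_one]
  | cons i l ih =>
    obtain ⟨hi, hl⟩ := List.nodup_cons.1 hl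
    have hi' : i ∉ l.toFinset := List.mem_toFinset.not.2 hi
    rw [List.map_cons, List.prod_cons, ih hl, List.toFinset_cons]
    apply coe_mul_coe_eq_of_coprime
    · exact Finset.inf_mono (Finset.compl_subset_compl.2 (by simp))
    · exact Finset.inf_mono (Finset.compl_subset_compl.2 (Finset.subset_insert i _))
    · simp only [card_finset_inf_of_pairwise_coprime hQ hprod, compl_compl, Finset.prod_singleton,
        Finset.prod_insert hi']
    · simp only [card_finset_inf_of_pairwise_coprime hQ hprod, compl_compl, Finset.prod_singleton]
      exact Nat.Coprime.prod_right fun j hj => hQ (ne_of_mem_of_not_mem hj hi').symm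

end HallSystem

end Subgroup

theorem exists_sylow_system_of_solvable_general (G : Type*) [Group G] [Fintype G] [Group.IsSolvable G]
    (r : ℕ) (p a : Fin r → ℕ) (hp : ∀ i, (p i).Prime) (hinj : Function.Injective p)
    (hcard : Fintype.card G = ∏ i, p i ^ a i) :
    ∃ P : Fin r → Subgroup G,
      (∀ i, Nat.card ↥(P i) = p i ^ a i) ∧
        (∀ i j, i ≠ j →
          (P i : Set G) * (P j : Set G) = (P j : Set G) * (P i : Set G)) ∧
        ∀ l : List (Fin r), l.Nodup →
          ∃ K : Subgroup G, (K : Set G) = (l.map fun i => ((P i : Set G))).prod := by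
  have hcardG : Nat.card G = ∏ i, p i ^ a i := by rw [Nat.card_eq_fintype_card, hcard]
  have hcop : Pairwise fun i j => Nat.Coprime (p i ^ a i) (p j ^ a j) := fun i j hij =>
    Nat.Coprime.pow _ _ ((Nat.coprime_primes (hp i) (hp j)).2 (hinj.ne hij))
  have hHall : ∀ i, ∃ Q : Subgroup G, Q.index = p i ^ a i := fun i =>
    Subgroup.exists_index_eq_of_coprime
      (by rw [hcardG, ← Finset.prod_erase_mul _ _ (Finset.mem_univ i)])
      (Nat.Coprime.prod_left fun j hj => hcop (Finset.ne_of_mem_erase hj))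
  choose Q hQ using hHall
  have hQcop : Pairwise fun i j => Nat.Coprime (Q i).index (Q j).index := by
    simpa only [hQ] using hcop
  have hQprod : ∏ i, (Q i).index = Nat.card G := by simp only [hQ, hcardG]
  have hprod := Subgroup.coe_list_prod_finset_inf_compl_singleton hQcop hQprod
  refine ⟨fun i => ({i}ᶜ : Finset (Fin r)).inf Q, fun i => ?_, fun i j hij => ?_,
    fun l hl => ⟨_, (hprod l hl).symm⟩⟩
  · rw [Subgroup.card_finset_inf_of_pairwise_coprime hQcop hQprod, compl_compl,
      Finset.prod_singleton, hQ]
  · have hswap : [i, j].toFinset = [j, i].toFinset := by ext; simp [or_comm]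
    have hij' := hprod [i, j] (by simp [hij])
    have hji := hprod [j, i] (by simp [hij.symm])
    simp only [List.map_cons, List.map_nil, List.prod_cons, List.prod_nil, mul_one] at hij' hji
    rw [hij', hji, hswap]

/-- (P. Hall) A finite solvable group of order `p₁^a₁ ⋯ p_r^a_r` has a Sylow system: a
family of Sylow subgroups `P 1, …, P r` (one for each prime) such that
`P i * P j = P j * P i` for all `i ≠ j` and the product of the members of any subset of
the family (as a set) is a subgroup of `G`. -/
theorem exists_sylow_system_of_solvable (G : Type*) [Group G] [Fintype G] [Group.IsSolvable G]
    (r : ℕ) (p a : Fin r → ℕ) (hp : ∀ i, (p i).Prime) (hinj : Function.Injective p)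
    (ha : ∀ i, 0 < a i) (hcard : Fintype.card G = ∏ i, p i ^ a i) :
    ∃ P : Fin r → Subgroup G,
      (∀ i, Nat.card ↥(P i) = p i ^ a i) ∧
        (∀ i j, i ≠ j →
          (P i : Set G) * (P j : Set G) = (P j : Set G) * (P i : Set G)) ∧
        ∀ l : List (Fin r), l.Nodup →
          ∃ K : Subgroup G, (K : Set G) = (l.map fun i => ((P i : Set G))).prod :=
  exists_sylow_system_of_solvable_general G r p a hp hinj hcard
end

section
/- Let G be a finite group, P a Sylow p-subgroup of G, and G' the commutator subgroup of G. Then the image of the transfer homomorphism V_{G→P} : G → P/P' is isomorphic to P/(P ∩ G'). -/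
/-!
Write `V` for the transfer `G → H/H'`. Modulo the focal subgroup `H* ≤ H ∩ G'`, conjugation by
elements of `G` is trivial on `H`, so for `h ∈ H` the image of `V h` in `H/H*` is `h ^ [G : H]`.
When `|H|` is coprime to `[G : H]` (e.g. `H` Sylow), this power is trivial only if `h ∈ H*`,
so `V` restricted to `H` has kernel `H ∩ G'`. Moreover `|V(G)|` divides `|H|`, hence is coprime
to `[G : H]`, and `[G : H ker V]` divides both: thus `G = H ker V` and `V(G) = V(H) ≅ H/(H ∩ G')`.
-/

open MonoidHom Subgroup

section Transfer

variable {G : Type*} [Group G]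

theorem MonoidHom.map_transfer {H : Subgroup G} [H.FiniteIndex] {A B : Type*} [CommGroup A]
    [CommGroup B] (ϕ : H →* A) (f : A →* B) (g : G) :
    f (transfer ϕ g) = transfer (f.comp ϕ) g := by
  have := Fintype.ofFinite (Quotient (MulAction.orbitRel (zpowers g) (G ⧸ H)))
  simp only [transfer_eq_prod_quotient_orbitRel_zpowers_quot, map_prod, coe_comp,
    Function.comp_apply]

theorem Subgroup.map_eq_range_of_coprime {A : Type*} [Group A] (f : G →* A) (H : Subgroup G)
    (h : H.index.Coprime (Nat.card f.range)) : H.map f = f.range := by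
  have hsup : H ⊔ f.ker = ⊤ := by
    rw [← index_eq_one]
    refine Nat.eq_one_of_dvd_coprimes h (index_dvd_of_le le_sup_left) ?_
    exact index_ker f ▸ index_dvd_of_le le_sup_right
  rw [range_eq_map, map_eq_map_iff, hsup, top_sup_eq]

namespace Subgroup

variable (H : Subgroup G) [H.FiniteIndex]

theorem card_range_transfer_of_dvd :
    Nat.card (transfer (Abelianization.of (G := H))).range ∣ Nat.card H :=
  (card_subgroup_dvd_card _).trans (card_quotient_dvd_card _)

section Focal

open scoped IsMulCommutative

theorem lift_transfer_of_eq_transferFocal (g : G) :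
    Abelianization.lift (QuotientGroup.mk' H.focalSubgroupOf)
      (transfer (Abelianization.of (G := H)) g) = H.transferFocal g :=
  map_transfer _ _ g

variable {H}

theorem ker_domRestrict_transfer_of (hH : (Nat.card H).Coprime H.index) :
    ((transfer (Abelianization.of (G := H))).domRestrict H).ker =
      (_root_.commutator G).subgroupOf H := by
  refine le_antisymm (fun h hh => ?_) fun h hh =>
    Abelianization.commutator_subset_ker (transfer Abelianization.of) (mem_subgroupOf.mp hh)
  have hpow : (h : H ⧸ H.focalSubgroupOf) ^ H.index = 1 := by
    rw [← transferFocal_eq_pow, ← lift_transfer_of_eq_transferFocal, ← domRestrict_apply, hh,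
      map_one]
  have hcard : (h : H ⧸ H.focalSubgroupOf) ^ Nat.card H = 1 := by
    rw [← QuotientGroup.mk_pow, pow_card_eq_one', QuotientGroup.mk_one]
  have hfocal : h ∈ H.focalSubgroupOf :=
    (QuotientGroup.eq_one_iff h).mp ((pow_eq_one_iff_of_coprime hH).mp ⟨hcard, hpow⟩)
  exact mem_subgroupOf.mpr (focalSubgroup_le_commutator H hfocal)

end Focal

variable {H}

theorem range_transfer_of_eq_map (hH : (Nat.card H).Coprime H.index) :
    (transfer (Abelianization.of (G := H))).range = H.map (transfer Abelianization.of) :=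
  (map_eq_range_of_coprime _ H (hH.symm.coprime_dvd_right (card_range_transfer_of_dvd H))).symm

noncomputable def rangeTransferOfMulEquivQuotient (hH : (Nat.card H).Coprime H.index) :
    (transfer (Abelianization.of (G := H))).range ≃* H ⧸ (_root_.commutator G).subgroupOf H :=
  (MulEquiv.subgroupCongr
      ((range_transfer_of_eq_map hH).trans (domRestrict_range (K := H) _).symm)).trans
    ((QuotientGroup.quotientKerEquivRange _).symm.trans
      (QuotientGroup.quotientMulEquivOfEq (ker_domRestrict_transfer_of hH)))

end Subgroup

end Transfer

/-- If `P` is a Sylow `p`-subgroup of a finite group `G`, then the image of the transfer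
homomorphism `V : G → P/P'` (the transfer of the abelianization map `P → P/P'`) is
isomorphic to `P/(P ∩ G')`, where `G'` is the commutator subgroup of `G`. -/
theorem transfer_range_iso (G : Type*) [Group G] [Finite G] (p : ℕ) [Fact p.Prime]
    (P : Sylow p G) :
    Nonempty
      ((MonoidHom.transfer (Abelianization.of (G := ↥(P : Subgroup G)))).range ≃*
        (↥(P : Subgroup G) ⧸ (commutator G).subgroupOf (P : Subgroup G))) :=
  ⟨rangeTransferOfMulEquivQuotient P.card_coprime_index⟩
end

section
/- (Second Theorem of Grün) Suppose G is a finite group that is p-normal for a prime p, and let P be a Sylow p-subgroup of G. Then the maximal abelian p-factor group of G is isomorphic to the maximal abelian p-factor group of N_G(Z(P)). -/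
/-- The center of a subgroup `P ≤ G`, viewed as a subgroup of `G`. -/
def centerAsSubgroup {G : Type*} [Group G] (P : Subgroup G) : Subgroup G :=
  Subgroup.map P.subtype (Subgroup.center ↥P)

/-- `A = H'(p)` is the smallest normal subgroup of `H` whose quotient is an abelian
`p`-group (so `H/A` is the maximal abelian `p`-factor group of `H`): `A` is normal,
contains the commutator subgroup, has `p`-power index, and is contained in every normal
subgroup containing the commutator subgroup and having `p`-power index. -/
def IsMaxAbelianPFactorKernel (p : ℕ) (H : Type*) [Group H] (A : Subgroup H) : Prop :=
  A.Normal ∧ commutator H ≤ A ∧ (∃ m : ℕ, A.index = p ^ m) ∧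
    ∀ K : Subgroup H, K.Normal → commutator H ≤ K → (∃ m : ℕ, K.index = p ^ m) → A ≤ K

/-!
Transfer into `P ⧸ P*`, where `P*` is the focal subgroup of `P` (generated by the commutators
`⁅x, u⁆` lying in `P` with `x ∈ P`), is onto with kernel `G'(p)`, so `G ⧸ G'(p) ≃* P ⧸ P*`
(focal subgroup theorem). The same holds in `N = N_G(Z(P))`, which contains `P`, so it
suffices that `N` controls `G`-fusion in `P`: then `P*` computed in `G` and in `N` agree.

For this, let `x` and `y = u x u⁻¹` lie in `P`. Both `Z(P)` and `u Z(P) u⁻¹ = Z(uPu⁻¹)`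
centralize `y`, so Sylow's theorem in `C_G(y)` gives `c ∈ C_G(y)` conjugating `Z(uPu⁻¹)` into
a Sylow subgroup `R` that contains `Z(P)`. By `p`-normality `Z(P) = Z(R) = Z(cuPu⁻¹c⁻¹)`,
hence `cu ∈ N`, and `cu` conjugates `x` to `y`.
-/

open Subgroup
open scoped Pointwise commutatorElement

section Center

variable {G : Type*} [Group G]

theorem mem_centerAsSubgroup {P : Subgroup G} {x : G} :
    x ∈ centerAsSubgroup P ↔ x ∈ P ∧ ∀ y ∈ P, y * x = x * y := by
  constructor
  · rintro ⟨z, hz, rfl⟩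
    exact ⟨z.2, fun y hy => congrArg Subtype.val (mem_center_iff.mp hz ⟨y, hy⟩)⟩
  · rintro ⟨hx, hc⟩
    exact ⟨⟨x, hx⟩, mem_center_iff.mpr fun y => Subtype.ext (hc y y.2), rfl⟩

theorem centerAsSubgroup_le (P : Subgroup G) : centerAsSubgroup P ≤ P :=
  fun _ hx => (mem_centerAsSubgroup.mp hx).1

theorem le_centralizer_centerAsSubgroup (P : Subgroup G) :
    P ≤ centralizer (centerAsSubgroup P : Set G) :=
  fun _ hy _ hz => ((mem_centerAsSubgroup.mp hz).2 _ hy).symm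

theorem le_normalizer_centerAsSubgroup (P : Subgroup G) :
    P ≤ normalizer (centerAsSubgroup P : Set G) :=
  (le_centralizer_centerAsSubgroup P).trans (centralizer_le_normalizer _)

theorem centerAsSubgroup_le_centralizer_singleton {P : Subgroup G} {y : G} (hy : y ∈ P) :
    centerAsSubgroup P ≤ centralizer {y} :=
  fun _ hz => mem_centralizer_singleton_iff.mpr ((mem_centerAsSubgroup.mp hz).2 y hy).symm

theorem centerAsSubgroup_conj_smul (g : G) (P : Subgroup G) :
    centerAsSubgroup (MulAut.conj g • P) = MulAut.conj g • centerAsSubgroup P := by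
  ext x
  simp only [mem_centerAsSubgroup, mem_pointwise_smul_iff_inv_smul_mem, MulAut.smul_def,
    ← map_inv, MulAut.conj_apply, inv_inv]
  refine and_congr_right fun _ => ⟨fun h y hy => ?_, fun h y hy => ?_⟩
  · have := congrArg (g⁻¹ * · * g) (h (g * y * g⁻¹) (by simpa [mul_assoc] using hy))
    simpa [mul_assoc] using this
  · have := congrArg (g * · * g⁻¹) (h _ hy)
    simpa [mul_assoc] using this

theorem mem_normalizer_of_conj_smul_eq {H : Subgroup G} {g : G} (h : MulAut.conj g • H = H) :
    g ∈ normalizer (H : Set G) := by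
  rw [mem_normalizer_iff]
  intro x
  conv_rhs => rw [← h]
  simp [mem_pointwise_smul_iff_inv_smul_mem, mul_assoc]

end Center

def IsPNormal (p : ℕ) (G : Type*) [Group G] : Prop :=
  ∀ P Q : Sylow p G, centerAsSubgroup (P : Subgroup G) ≤ Q →
    centerAsSubgroup (P : Subgroup G) = centerAsSubgroup (Q : Subgroup G)

def ControlsFusion {G : Type*} [Group G] (N H : Subgroup G) : Prop :=
  ∀ x ∈ H, ∀ u : G, u * x * u⁻¹ ∈ H → ∃ n ∈ N, n * x * n⁻¹ = u * x * u⁻¹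

namespace Sylow

variable {G : Type*} [Group G] {p : ℕ}

theorem centerAsSubgroup_smul (g : G) (P : Sylow p G) :
    centerAsSubgroup ((g • P : Sylow p G) : Subgroup G) =
      MulAut.conj g • centerAsSubgroup (P : Subgroup G) := by
  rw [Sylow.coe_subgroup_smul, centerAsSubgroup_conj_smul]

theorem isPGroup_centerAsSubgroup (P : Sylow p G) :
    IsPGroup p (centerAsSubgroup (P : Subgroup G)) :=
  P.isPGroup'.to_le (centerAsSubgroup_le _)

end Sylow

section Fusion

variable {G : Type*} [Group G] [Finite G] {p : ℕ} [Fact p.Prime]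

theorem IsPGroup.exists_conj_smul_le_sylow {C X Y : Subgroup G} (hX : IsPGroup p X)
    (hY : IsPGroup p Y) (hXC : X ≤ C) (hYC : Y ≤ C) :
    ∃ c ∈ C, ∃ R : Sylow p G, X ≤ R ∧ MulAut.conj c • Y ≤ R := by
  obtain ⟨S, hS⟩ := (hX.comap_subtype (K := C)).exists_le_sylow
  obtain ⟨T, hT⟩ := (hY.comap_subtype (K := C)).exists_le_sylow
  obtain ⟨c, rfl⟩ := MulAction.exists_smul_eq C T S
  obtain ⟨R, hR⟩ := ((c • T).isPGroup'.map C.subtype).exists_le_sylow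
  refine ⟨c, c.2, R, ?_, ?_⟩
  · calc X = (X.subgroupOf C).map C.subtype := (map_subgroupOf_eq_of_le hXC).symm
      _ ≤ R := (map_mono hS).trans hR
  · calc MulAut.conj (c : G) • Y
        = ((MulAut.conj (c : G) • Y).subgroupOf C).map C.subtype :=
          (map_subgroupOf_eq_of_le (conj_smul_le_of_le hYC c)).symm
      _ = (MulAut.conj c • Y.subgroupOf C).map C.subtype := by rw [conj_smul_subgroupOf hYC]
      _ ≤ R := by
          refine (map_mono ?_).trans hR
          rw [Sylow.coe_subgroup_smul]
          exact pointwise_smul_le_pointwise_smul_iff.mpr hT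

theorem IsPNormal.controlsFusion (hG : IsPNormal p G) (P : Sylow p G) :
    ControlsFusion (normalizer (centerAsSubgroup (P : Subgroup G) : Set G)) P := by
  intro x hx g hgx
  set y := g * x * g⁻¹
  have hy : y ∈ ((g • P : Sylow p G) : Subgroup G) := by
    rw [Sylow.coe_subgroup_smul, mem_pointwise_smul_iff_inv_smul_mem]
    simpa [y, mul_assoc] using hx
  obtain ⟨c, hc, R, hPR, hgPR⟩ := IsPGroup.exists_conj_smul_le_sylow
    P.isPGroup_centerAsSubgroup (g • P).isPGroup_centerAsSubgroup
    (centerAsSubgroup_le_centralizer_singleton hgx)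
    (centerAsSubgroup_le_centralizer_singleton hy)
  rw [← Sylow.centerAsSubgroup_smul] at hgPR
  have hcgP : centerAsSubgroup ((c • g • P : Sylow p G) : Subgroup G) =
      centerAsSubgroup (P : Subgroup G) := by
    rw [hG P R hPR, hG _ R hgPR]
  rw [← mul_smul, Sylow.centerAsSubgroup_smul] at hcgP
  refine ⟨c * g, mem_normalizer_of_conj_smul_eq hcgP, ?_⟩
  have hcy : c * y = y * c := mem_centralizer_singleton_iff.mp hc
  calc c * g * x * (c * g)⁻¹ = c * y * c⁻¹ := by simp [y, mul_assoc]
    _ = y := by rw [hcy, mul_inv_cancel_right]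

end Fusion

section Focal

variable {G : Type*} [Group G] {H N : Subgroup G}

theorem ControlsFusion.map_subtype_focalSubgroup_subgroupOf (hHN : H ≤ N)
    (hfus : ControlsFusion N H) :
    (focalSubgroup (H.subgroupOf N)).map N.subtype = focalSubgroup H := by
  rw [focalSubgroup_def, focalSubgroup_def, MonoidHom.map_closure]
  refine le_antisymm (closure_mono ?_) (closure_le _ |>.mpr ?_)
  · rintro _ ⟨g, ⟨hg, x, hx, u, rfl⟩, rfl⟩
    exact ⟨hg, x, hx, u, rfl⟩
  · rintro _ ⟨hg, x, hx, u, rfl⟩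
    -- `⁅x, u⁆ = x * (u * x⁻¹ * u⁻¹)`: fusing `x⁻¹` within `N` replaces `u` by some `n ∈ N`.
    have hux : u * x⁻¹ * u⁻¹ ∈ H := by
      simpa [commutatorElement_def, mul_assoc] using H.mul_mem (H.inv_mem hx) hg
    obtain ⟨n, hn, hnx⟩ := hfus _ (H.inv_mem hx) u hux
    have hcomm : ⁅x, n⁆ = ⁅x, u⁆ := by
      simp only [commutatorElement_def, mul_assoc] at hnx ⊢
      rw [hnx]
    refine subset_closure
      ⟨⁅(⟨x, hHN hx⟩ : N), ⟨n, hn⟩⁆, ⟨?_, ⟨x, hHN hx⟩, hx, ⟨n, hn⟩, rfl⟩, hcomm⟩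
    show ⁅x, n⁆ ∈ H
    rwa [hcomm]

theorem ControlsFusion.map_focalSubgroupOf_subgroupOfEquivOfLe (hHN : H ≤ N)
    (hfus : ControlsFusion N H) :
    (focalSubgroupOf (H.subgroupOf N)).map (subgroupOfEquivOfLe hHN : H.subgroupOf N →* H) =
      focalSubgroupOf H := by
  apply map_injective H.subtype_injective
  rw [map_map, map_focalSubgroupOf, ← hfus.map_subtype_focalSubgroup_subgroupOf hHN,
    ← map_focalSubgroupOf, map_map]
  rfl

end Focal

namespace Sylow

open scoped IsMulCommutative

variable {G : Type*} [Group G] [Finite G] {p : ℕ} [Fact p.Prime]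

theorem sup_eq_top_of_index_eq_pow (P : Sylow p G) {K : Subgroup G} {m : ℕ}
    (hK : K.index = p ^ m) : K ⊔ P = ⊤ := by
  have hcop : (p ^ m).Coprime (P : Subgroup G).index :=
    Nat.Coprime.pow_left m ((Nat.Prime.coprime_iff_not_dvd Fact.out).mpr P.not_dvd_index)
  rw [← index_eq_one]
  exact Nat.eq_one_of_dvd_coprimes hcop (hK ▸ index_dvd_of_le le_sup_left)
    (index_dvd_of_le le_sup_right)

theorem index_dvd_index_focalSubgroupOf (P : Sylow p G) {K : Subgroup G} [K.Normal]
    (hK : commutator G ≤ K) {m : ℕ} (hKidx : K.index = p ^ m) :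
    K.index ∣ (focalSubgroupOf (P : Subgroup G)).index :=
  calc K.index = K.relIndex (P ⊔ K) := by
        rw [sup_comm, P.sup_eq_top_of_index_eq_pow hKidx, relIndex_top_right]
    _ = K.relIndex P := relIndex_sup_right _ _
    _ ∣ (focalSubgroup (P : Subgroup G)).relIndex P :=
        relIndex_dvd_of_le_left _ ((focalSubgroup_le_commutator _).trans hK)

theorem index_ker_transferFocal (P : Sylow p G) :
    (P : Subgroup G).transferFocal.ker.index = (focalSubgroupOf (P : Subgroup G)).index := by
  rw [index_eq_card, index_eq_card]
  exact Nat.card_congr (transferFocal.quotientKerMulEquivQuotientFocalSubroupOf P).toEquiv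

theorem isMaxAbelianPFactorKernel_ker_transferFocal (P : Sylow p G) :
    IsMaxAbelianPFactorKernel p G (P : Subgroup G).transferFocal.ker := by
  set L := (P : Subgroup G).transferFocal.ker
  have hLcomm : commutator G ≤ L := Abelianization.commutator_subset_ker _
  obtain ⟨m, hm⟩ :=
    (P.isPGroup'.to_quotient (focalSubgroupOf (P : Subgroup G))).exists_card_eq
  have hLidx : L.index = p ^ m := by rw [P.index_ker_transferFocal, index_eq_card, hm]
  refine ⟨MonoidHom.normal_ker _, hLcomm, ⟨m, hLidx⟩, fun K _ hKcomm ⟨k, hk⟩ => ?_⟩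
  -- `K ⊓ L` is again such a kernel, so its index divides `|P ⧸ P*| = [G : L]`.
  have hKL : (K ⊓ L).index = K.relIndex L * L.index := by
    rw [← inf_relIndex_right, relIndex_mul_index inf_le_right]
  obtain ⟨i, -, hi⟩ := (Nat.dvd_prime_pow Fact.out).mp (hk ▸ relIndex_dvd_index_of_normal K L)
  have hdvd : (K ⊓ L).index ∣ L.index := by
    rw [P.index_ker_transferFocal]
    exact P.index_dvd_index_focalSubgroupOf (le_inf hKcomm hLcomm)
      (by rw [hKL, hi, hLidx, ← pow_add])
  have hLpos : 0 < L.index := hLidx ▸ pow_pos (Fact.out : p.Prime).pos m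
  rw [hKL] at hdvd
  rw [← relIndex_eq_one, ← Nat.dvd_one]
  exact (Nat.mul_dvd_mul_iff_right hLpos).mp (by simpa using hdvd)

end Sylow

/-- (Second Theorem of Grün) If a finite group `G` is `p`-normal (whenever the center
`Z(P)` of a Sylow `p`-subgroup `P` is contained in another Sylow `p`-subgroup `Q`, one has
`Z(P) = Z(Q)`), then the maximal abelian `p`-factor group of `G` is isomorphic to the
maximal abelian `p`-factor group of `N_G(Z(P))`, for `P` a Sylow `p`-subgroup. -/
theorem gruen_second_theorem (G : Type*) [Group G] [Finite G] (p : ℕ) [Fact p.Prime]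
    (hpnormal : ∀ P Q : Sylow p G,
      centerAsSubgroup (P : Subgroup G) ≤ (Q : Subgroup G) →
        centerAsSubgroup (P : Subgroup G) = centerAsSubgroup (Q : Subgroup G))
    (P : Sylow p G) :
    ∃ (A : Subgroup G)
      (B : Subgroup ↥(Subgroup.normalizer ((centerAsSubgroup (P : Subgroup G) : Set G)))),
      IsMaxAbelianPFactorKernel p G A ∧
        IsMaxAbelianPFactorKernel p ↥(Subgroup.normalizer ((centerAsSubgroup (P : Subgroup G) : Set G))) B ∧
          ∃ (hA : A.Normal) (hB : B.Normal),
            letI := hA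
            letI := hB
            Nonempty
              ((G ⧸ A) ≃*
                (↥(Subgroup.normalizer ((centerAsSubgroup (P : Subgroup G) : Set G))) ⧸ B)) := by
  have hPN := le_normalizer_centerAsSubgroup (P : Subgroup G)
  have hfocal :=
    (IsPNormal.controlsFusion hpnormal P).map_focalSubgroupOf_subgroupOfEquivOfLe hPN
  let P' := P.subtype hPN
  refine ⟨_, _, P.isMaxAbelianPFactorKernel_ker_transferFocal,
    P'.isMaxAbelianPFactorKernel_ker_transferFocal, MonoidHom.normal_ker _,
    MonoidHom.normal_ker _, ⟨?_⟩⟩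
  exact (transferFocal.quotientKerMulEquivQuotientFocalSubroupOf P).trans <|
    (QuotientGroup.congr _ _ _ hfocal).symm.trans
      (transferFocal.quotientKerMulEquivQuotientFocalSubroupOf P').symm
end

section
/- Every finite supersolvable group has an ordered Sylow tower; in particular, if G is a finite supersolvable group of order p_1^{a_1} p_2^{a_2} ⋯ p_r^{a_r} with primes p_1 < p_2 < ⋯ < p_r, then there is a chain of subgroups G = R_0 ⊇ R_1 ⊇ ⋯ ⊇ R_r = {e}, each R_i normal in G, with |R_{i−1} : R_i| = p_i^{a_i} for i = 1, …, r. -/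
/-- A group `G` is *supersolvable* if there is a chain of subgroups
`{e} = R 0 ⊆ R 1 ⊆ ⋯ ⊆ R m = G`, each normal in `G`, with all successive quotients
`R (i+1) / R i` cyclic. -/
def IsSupersolvable (G : Type*) [Group G] : Prop :=
  ∃ (m : ℕ) (R : Fin (m + 1) → Subgroup G) (hR : ∀ i, (R i).Normal),
    Monotone R ∧ R 0 = ⊥ ∧ R (Fin.last m) = ⊤ ∧
      ∀ i : Fin m,
        letI : ((R i.castSucc).subgroupOf (R i.succ)).Normal :=
          Subgroup.Normal.subgroupOf (hR i.castSucc) _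
        IsCyclic (↥(R i.succ) ⧸ (R i.castSucc).subgroupOf (R i.succ))

/-!
A nontrivial finite supersolvable group has a normal subgroup `N` of prime order `p`: the
`p`-torsion of the first nontrivial (cyclic) term of its series. If `q` is the largest prime
dividing `|G|` and `P` is a Sylow `q`-subgroup, then by induction on `|G|` the image of `P` in
`G ⧸ N` is normal, hence so is its preimage `K = PN`. In `K` the index of `P` divides `p·q^b` and
is prime to `q`, so it is less than `q`, and Sylow's theorems make `P` the only Sylow
`q`-subgroup of `K`; being characteristic in the normal subgroup `K`, it is normal in `G`.
Factoring out this normal Sylow subgroup for the largest prime and recursing on `G ⧸ P` builds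
the tower from the bottom.
-/

open Subgroup

theorem Fin.exists_castSucc_eq_and_succ_ne {α : Type*} {m : ℕ} {f : Fin (m + 1) → α} {x : α}
    (h0 : f 0 = x) (hlast : f (Fin.last m) ≠ x) :
    ∃ i : Fin m, f i.castSucc = x ∧ f i.succ ≠ x := by
  by_contra! h
  exact hlast (Fin.induction (motive := fun i => f i = x) h0 h (Fin.last m))

theorem Nat.Prime.exists_eq_of_dvd_prod_pow {ι : Type*} {s : Finset ι} {p a : ι → ℕ}
    (hp : ∀ i, (p i).Prime) {t : ℕ} (ht : t.Prime) (hdvd : t ∣ ∏ i ∈ s, p i ^ a i) :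
    ∃ i ∈ s, t = p i := by
  obtain ⟨i, hi, hti⟩ := ht.prime.exists_mem_finset_dvd hdvd
  exact ⟨i, hi, (Nat.prime_dvd_prime_iff_eq ht (hp i)).mp (ht.dvd_of_dvd_pow hti)⟩

theorem Nat.lt_of_dvd_prime_mul_pow {p q b i : ℕ} (hp : p.Prime) (hq : q.Prime) (hpq : p ≤ q)
    (hi : i ∣ p * q ^ b) (hqi : ¬ q ∣ i) : i < q := by
  have hip : i ∣ p :=
    (((hq.coprime_iff_not_dvd.mpr hqi).pow_left b).symm).dvd_of_dvd_mul_right hi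
  rcases hp.eq_one_or_self_of_dvd i hip with rfl | rfl
  · exact hq.one_lt
  · exact hpq.lt_of_ne fun h => hqi (h ▸ dvd_rfl)

theorem Sylow.normal_of_index_lt {G : Type*} [Group G] [Finite G] {q : ℕ} [hq : Fact q.Prime]
    (P : Sylow q G) (h : P.index < q) : P.Normal := by
  have hlt : Nat.card (Sylow q G) < q :=
    (Nat.le_of_dvd (Nat.pos_of_ne_zero index_ne_zero_of_finite) P.card_dvd_index).trans_lt h
  have hone : Nat.card (Sylow q G) = 1 := by
    simpa [Nat.ModEq, Nat.mod_eq_of_lt hlt, Nat.mod_eq_of_lt hq.out.one_lt] using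
      card_sylow_modEq_one q G
  have := (Nat.card_eq_one_iff_unique.mp hone).1
  exact P.normal_of_subsingleton

theorem Sylow.card_eq_pow_of_card_eq_mul {G : Type*} [Group G] [Finite G] {q : ℕ}
    [hq : Fact q.Prime] (P : Sylow q G) {m a : ℕ} (hcard : Nat.card G = m * q ^ a)
    (hqm : ¬ q ∣ m) : Nat.card P = q ^ a := by
  have hm : m ≠ 0 := by rintro rfl; exact hqm (dvd_zero q)
  rw [P.card_eq_multiplicity, hcard, Nat.factorization_mul hm (pow_ne_zero _ hq.out.ne_zero),
    Finsupp.add_apply, Nat.factorization_eq_zero_of_not_dvd hqm, hq.out.factorization_pow,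
    Finsupp.single_eq_same, zero_add]

theorem Subgroup.exists_normal_card_prime_of_isCyclic {G : Type*} [Group G] [Finite G]
    (M : Subgroup G) [M.Normal] [IsCyclic M] (hM : M ≠ ⊥) :
    ∃ N : Subgroup G, N.Normal ∧ (Nat.card N).Prime := by
  obtain ⟨p, hp, hpM⟩ := Nat.exists_prime_and_dvd (mt Subgroup.card_eq_one.mp hM)
  let := IsCyclic.commGroup (α := M)
  let T : Subgroup M := (powMonoidHom p : M →* M).ker
  have : T.Characteristic := characteristic_iff_le_comap.mpr fun φ x (hx : x ^ p = 1) =>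
    show φ x ^ p = 1 by rw [← map_pow, hx, map_one]
  refine ⟨T.map M.subtype, inferInstance, ?_⟩
  rwa [card_map_of_injective M.subtype_injective, IsCyclic.card_powMonoidHom_ker,
    Nat.gcd_eq_right hpM]

theorem IsSupersolvable.of_surjective {G G' : Type*} [Group G] [Group G'] {f : G →* G'}
    (hf : Function.Surjective f) (hss : IsSupersolvable G) : IsSupersolvable G' := by
  obtain ⟨m, R, hR, hmono, h0, hlast, hcyc⟩ := hss
  refine ⟨m, fun i => (R i).map f, fun i => (hR i).map f hf, fun _ _ hij => map_mono (hmono hij),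
    by simp [h0], ?_, fun i => ?_⟩
  · simp only [hlast, ← MonoidHom.range_eq_map, MonoidHom.range_eq_top_of_surjective f hf]
  have := (hR i.castSucc).subgroupOf (R i.succ)
  have := ((hR i.castSucc).map f hf).subgroupOf ((R i.succ).map f)
  have : IsCyclic (↥(R i.succ) ⧸ (R i.castSucc).subgroupOf (R i.succ)) := hcyc i
  have hle : (R i.castSucc).subgroupOf (R i.succ) ≤
      (((R i.castSucc).map f).subgroupOf ((R i.succ).map f)).comap (f.subgroupMap (R i.succ)) :=
    fun x hx => ⟨x, hx, rfl⟩
  exact isCyclic_of_surjective _ (QuotientGroup.map_surjective_of_surjective _ _ _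
    (QuotientGroup.mk_surjective.comp (f.subgroupMap_surjective _)) hle)

theorem IsSupersolvable.exists_normal_isCyclic_ne_bot {G : Type*} [Group G] [Nontrivial G]
    (hss : IsSupersolvable G) : ∃ M : Subgroup G, M.Normal ∧ IsCyclic M ∧ M ≠ ⊥ := by
  obtain ⟨m, R, hR, -, h0, hlast, hcyc⟩ := hss
  obtain ⟨i, hbot, hne⟩ :=
    Fin.exists_castSucc_eq_and_succ_ne h0 (hlast ▸ top_ne_bot : R (Fin.last m) ≠ ⊥)
  have := (hR i.castSucc).subgroupOf (R i.succ)
  have e := (QuotientGroup.quotientMulEquivOfEq (M := (R i.castSucc).subgroupOf (R i.succ))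
    (N := ⊥) (by rw [hbot, bot_subgroupOf])).trans QuotientGroup.quotientBot
  exact ⟨R i.succ, hR _, e.isCyclic.mp (hcyc i), hne⟩

theorem IsSupersolvable.exists_normal_card_prime {G : Type*} [Group G] [Finite G] [Nontrivial G]
    (hss : IsSupersolvable G) : ∃ N : Subgroup G, N.Normal ∧ (Nat.card N).Prime := by
  obtain ⟨M, hM, hcyc, hne⟩ := hss.exists_normal_isCyclic_ne_bot
  exact M.exists_normal_card_prime_of_isCyclic hne

theorem IsSupersolvable.sylow_normal_of_forall_prime_dvd_le {G : Type*} [Group G] [Finite G]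
    (hss : IsSupersolvable G) {q : ℕ} [hq : Fact q.Prime]
    (hmax : ∀ p : ℕ, p.Prime → p ∣ Nat.card G → p ≤ q) (P : Sylow q G) : P.Normal := by
  induction hn : Nat.card G using Nat.strong_induction_on generalizing G with
  | _ n ih =>
  rcases subsingleton_or_nontrivial G with hG | hG
  · exact ⟨fun x _ g => by simp [Subsingleton.elim x 1]⟩
  obtain ⟨N, hN, hNp⟩ := hss.exists_normal_card_prime
  have hπ := QuotientGroup.mk'_surjective N
  have hGN : Nat.card G = Nat.card (G ⧸ N) * Nat.card N :=
    N.card_eq_card_quotient_mul_card_subgroup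
  have hQ : (P.map (QuotientGroup.mk' N)).Normal :=
    ih _ (hn ▸ hGN ▸ lt_mul_of_one_lt_right Nat.card_pos hNp.one_lt) (hss.of_surjective hπ)
      (fun p hp hpd => hmax p hp (hpd.trans N.card_quotient_dvd_card)) (P.mapSurjective hπ) rfl
  set K := (P.map (QuotientGroup.mk' N)).comap (QuotientGroup.mk' N)
  have hPK : P ≤ K := le_comap_map _ _
  obtain ⟨b, hb⟩ := IsPGroup.iff_card.mp (P.mapSurjective hπ).isPGroup'
  have hK : Nat.card K = Nat.card N * q ^ b := by
    rw [← hb]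
    exact QuotientGroup.card_preimage_mk N (P.map (QuotientGroup.mk' N) : Set (G ⧸ N))
  -- inside `K`, the Sylow subgroup `P` has index dividing `|N|`, a prime at most `q`
  have hidx : (P.subtype hPK).index < q :=
    Nat.lt_of_dvd_prime_mul_pow hNp hq.out (hmax _ hNp N.card_subgroup_dvd_card)
      (hK ▸ index_dvd_card _) (P.subtype hPK).not_dvd_index
  have := Sylow.characteristic_of_normal _ (Sylow.normal_of_index_lt _ hidx)
  have := ConjAct.normal_of_characteristic_of_normal (H := K) (K := P.subtype hPK)
  rwa [Sylow.coe_subtype, subgroupOf_map_subtype, inf_of_le_left hPK] at this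

def HasNormalSeriesWithIndices (G : Type*) [Group G] {r : ℕ} (n : Fin r → ℕ) : Prop :=
  ∃ R : Fin (r + 1) → Subgroup G,
    Antitone R ∧ R 0 = ⊤ ∧ R (Fin.last r) = ⊥ ∧ (∀ i, (R i).Normal) ∧
      ∀ i : Fin r, (R i.succ).relIndex (R i.castSucc) = n i

theorem HasNormalSeriesWithIndices.of_quotient {G : Type*} [Group G] {r : ℕ}
    {n : Fin (r + 1) → ℕ} (N : Subgroup G) [N.Normal] (hN : Nat.card N = n (Fin.last r))
    (h : HasNormalSeriesWithIndices (G ⧸ N) (Fin.init n)) : HasNormalSeriesWithIndices G n := by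
  obtain ⟨S, hanti, h0, hlast, hnormal, hidx⟩ := h
  set π := QuotientGroup.mk' N
  let R : Fin (r + 2) → Subgroup G := Fin.snoc (fun i => (S i).comap π) ⊥
  have hstep : ∀ i : Fin (r + 1),
      R i.succ ≤ R i.castSucc ∧ (R i.succ).relIndex (R i.castSucc) = n i := by
    refine Fin.lastCases ?_ fun j => ?_
    · simp [R, hlast, π, hN]
    · simp only [R, Fin.succ_castSucc, Fin.snoc_castSucc]
      refine ⟨comap_mono (hanti (Fin.castSucc_le_succ j)), ?_⟩
      rw [relIndex_comap, map_comap_eq_self_of_surjective (QuotientGroup.mk'_surjective N)]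
      exact hidx j
  refine ⟨R, Fin.antitone_iff_succ_le.mpr fun i => (hstep i).1, ?_, by simp [R], ?_,
    fun i => (hstep i).2⟩
  · simp [R, h0]
  · refine Fin.lastCases ?_ fun j => ?_
    · simp [R, normal_bot]
    · simpa [R] using (hnormal j).comap π

theorem IsSupersolvable.hasNormalSeriesWithIndices {G : Type*} [Group G] [Finite G]
    (hss : IsSupersolvable G) {r : ℕ} {p : Fin r → ℕ} (a : Fin r → ℕ) (hp : ∀ i, (p i).Prime)
    (hmono : StrictMono p) (hcard : Nat.card G = ∏ i, p i ^ a i) :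
    HasNormalSeriesWithIndices G fun i => p i ^ a i := by
  induction r generalizing G with
  | zero =>
    have : Subsingleton G := (Nat.card_eq_one_iff_unique.mp (by simpa using hcard)).1
    exact ⟨fun _ => ⊥, antitone_const, Subsingleton.elim _ _, rfl, fun _ => normal_bot,
      fun i => i.elim0⟩
  | succ r ih =>
    set q := p (Fin.last r)
    have : Fact q.Prime := ⟨hp _⟩
    have hmax : ∀ t : ℕ, t.Prime → t ∣ Nat.card G → t ≤ q := fun t ht htG => by
      obtain ⟨i, -, rfl⟩ := ht.exists_eq_of_dvd_prod_pow hp (hcard ▸ htG)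
      exact hmono.monotone (Fin.le_last i)
    rw [Fin.prod_univ_castSucc] at hcard
    have hqm : ¬ q ∣ ∏ i : Fin r, p i.castSucc ^ a i.castSucc := fun hq => by
      obtain ⟨i, -, hi⟩ := (hp _).exists_eq_of_dvd_prod_pow (fun i : Fin r => hp i.castSucc) hq
      exact (hmono (Fin.castSucc_lt_last i)).ne hi.symm
    obtain ⟨P⟩ : Nonempty (Sylow q G) := inferInstance
    have := hss.sylow_normal_of_forall_prime_dvd_le hmax P
    have hP := P.card_eq_pow_of_card_eq_mul hcard hqm
    refine HasNormalSeriesWithIndices.of_quotient (P : Subgroup G) hP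
      (ih (hss.of_surjective (QuotientGroup.mk'_surjective _)) (fun i => a i.castSucc)
        (fun i => hp _) (hmono.comp Fin.strictMono_castSucc) ?_)
    rw [(P : Subgroup G).card_eq_card_quotient_mul_card_subgroup, hP] at hcard
    exact Nat.eq_of_mul_eq_mul_right (pow_pos (hp _).pos _) hcard

theorem orderedSylowTower_of_supersolvable_general (G : Type*) [Group G] [Fintype G]
    (r : ℕ) (p a : Fin r → ℕ) (hp : ∀ i, (p i).Prime) (hmono : StrictMono p)
    (hcard : Fintype.card G = ∏ i, p i ^ a i)
    (hss : IsSupersolvable G) :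
    ∃ R : Fin (r + 1) → Subgroup G,
      Antitone R ∧ R 0 = ⊤ ∧ R (Fin.last r) = ⊥ ∧ (∀ i, (R i).Normal) ∧
        ∀ i : Fin r, (R i.succ).relIndex (R i.castSucc) = p i ^ a i :=
  hss.hasNormalSeriesWithIndices a hp hmono (Nat.card_eq_fintype_card.trans hcard)

/-- Every finite supersolvable group has an ordered Sylow tower: if `G` is a finite
supersolvable group of order `p₁^a₁ ⋯ p_r^a_r` with primes `p₁ < ⋯ < p_r`, then there is
a chain of subgroups `G = R 0 ⊇ R 1 ⊇ ⋯ ⊇ R r = {e}`, each normal in `G`, with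
`|R (i-1) : R i| = pᵢ^aᵢ`. -/
theorem orderedSylowTower_of_supersolvable (G : Type*) [Group G] [Fintype G]
    (r : ℕ) (p a : Fin r → ℕ) (hp : ∀ i, (p i).Prime) (hmono : StrictMono p)
    (ha : ∀ i, 0 < a i) (hcard : Fintype.card G = ∏ i, p i ^ a i)
    (hss : IsSupersolvable G) :
    ∃ R : Fin (r + 1) → Subgroup G,
      Antitone R ∧ R 0 = ⊤ ∧ R (Fin.last r) = ⊥ ∧ (∀ i, (R i).Normal) ∧
        ∀ i : Fin r, (R i.succ).relIndex (R i.castSucc) = p i ^ a i :=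
  orderedSylowTower_of_supersolvable_general G r p a hp hmono hcard hss
end
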